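/- arXiv:cs/0307023 — 7 statements merged into one kernel-verified Lean document; each statement's English description precedes it below -/
import Mathlib

section
/- Let A, B, C be three balls in ℝ^d such that A and B are concentric, A and C are externally tangent, A and C both have radius r > 0, and B has radius √5·r. Then the volume (Lebesgue measure) of B ∩ C is at least half the volume of A. -/
/-!
The ball `C = closedBall c r` splits into two halves exchanged by the point reflection through `c`,
which preserves Lebesgue measure, so the half of `C` facing `a` carries at least half the volume
of `C`, i.e. of `A`. On that half `⟪x - c, a - c⟫ ≥ 0`, hence
`‖x - a‖² ≤ ‖x - c‖² + ‖a - c‖² ≤ r² + (2r)² = 5r²`, so the half lies in `B`.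
-/

open MeasureTheory Metric
open scoped RealInnerProductSpace

section InnerProductSpace

variable {E : Type*} [NormedAddCommGroup E] [InnerProductSpace ℝ E]

theorem norm_sub_sq_le_of_inner_nonneg {x y : E} (h : 0 ≤ ⟪x, y⟫) :
    ‖x - y‖ ^ 2 ≤ ‖x‖ ^ 2 + ‖y‖ ^ 2 := by
  rw [norm_sub_sq_real]
  linarith

theorem closedBall_inter_halfSpace_subset (a c : E) (r : ℝ) :
    closedBall c r ∩ {x | 0 ≤ ⟪x - c, a - c⟫} ⊆ closedBall a √(r ^ 2 + dist a c ^ 2) := by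
  rintro x ⟨hxc, hx⟩
  rw [mem_closedBall, dist_eq_norm] at hxc ⊢
  rw [dist_eq_norm]
  have hsq : ‖x - a‖ ^ 2 ≤ ‖x - c‖ ^ 2 + ‖a - c‖ ^ 2 := by
    simpa only [sub_sub_sub_cancel_right] using norm_sub_sq_le_of_inner_nonneg hx
  have hr : ‖x - c‖ ^ 2 ≤ r ^ 2 := pow_le_pow_left₀ (norm_nonneg _) hxc 2
  exact Real.le_sqrt_of_sq_le (by linarith)

theorem measure_closedBall_le_two_mul_inter_halfSpace [MeasurableSpace E] [BorelSpace E]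
    (μ : Measure E) [μ.IsAddLeftInvariant] [μ.IsNegInvariant] (c u : E) (r : ℝ) :
    μ (closedBall c r) ≤ 2 * μ (closedBall c r ∩ {x | 0 ≤ ⟪x - c, u⟫}) := by
  set S := closedBall c r ∩ {x | 0 ≤ ⟪x - c, u⟫}
  have hS : MeasurableSet S :=
    (isClosed_closedBall.inter (isClosed_le continuous_const (by fun_prop))).measurableSet
  have hreflect : MeasurePreserving (fun x => (c + c) - x) μ μ :=
    Measure.measurePreserving_sub_left μ _
  have hdiff : closedBall c r \ {x | 0 ≤ ⟪x - c, u⟫} ⊆ (fun x => (c + c) - x) ⁻¹' S := by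
    rintro x ⟨hxc, hx⟩
    have hneg : (c + c) - x - c = -(x - c) := by abel
    simp only [Set.mem_ofPred_eq, not_le] at hx
    refine ⟨?_, ?_⟩
    · rwa [mem_closedBall, dist_eq_norm, hneg, norm_neg, ← dist_eq_norm]
    · simp only [Set.mem_ofPred_eq, hneg, inner_neg_left]
      linarith
  calc μ (closedBall c r)
      ≤ μ S + μ (closedBall c r \ {x | 0 ≤ ⟪x - c, u⟫}) := measure_le_inter_add_sdiff _ _ _
    _ ≤ μ S + μ S := add_le_add le_rfl
      ((measure_mono hdiff).trans_eq (hreflect.measure_preimage hS.nullMeasurableSet))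
    _ = 2 * μ S := (two_mul _).symm

end InnerProductSpace

/-- Lemma (√5-tangent): if `A = closedBall a r` and `C = closedBall c r` are externally
tangent balls of radius `r > 0` in `ℝ^d`, and `B = closedBall a (√5·r)` is concentric with `A`,
then the volume of `B ∩ C` is at least half the volume of `A`. -/
theorem stmt_0 (d : ℕ) (a c : EuclideanSpace ℝ (Fin d)) (r : ℝ) (hr : 0 < r)
    (htan : dist a c = 2 * r) :
    volume (closedBall a r) ≤
      2 * volume (closedBall a (Real.sqrt 5 * r) ∩ closedBall c r) := by
  have hradius : √(r ^ 2 + dist a c ^ 2) = √5 * r := by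
    rw [htan, show r ^ 2 + (2 * r) ^ 2 = 5 * r ^ 2 by ring,
      Real.sqrt_mul (by norm_num), Real.sqrt_sq hr.le]
  have hhalf := closedBall_inter_halfSpace_subset a c r
  rw [hradius] at hhalf
  calc volume (closedBall a r) = volume (closedBall c r) := by
        rw [Measure.addHaar_closedBall_center, Measure.addHaar_closedBall_center volume c]
    _ ≤ 2 * volume (closedBall c r ∩ {x | 0 ≤ ⟪x - c, a - c⟫}) :=
        measure_closedBall_le_two_mul_inter_halfSpace volume c (a - c) r
    _ ≤ 2 * volume (closedBall a (√5 * r) ∩ closedBall c r) :=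
        mul_le_mul_right (measure_mono (Set.subset_inter hhalf Set.inter_subset_left)) 2
end

section
/- Let A, B, D be three balls in ℝ^d such that A and B are concentric, A ∩ D ≠ ∅, A has radius r > 0, D has radius at least r, and B has radius √5·r. Then the volume of B ∩ D is at least half the volume of A. -/
open MeasureTheory Metric

lemma half_ball_vol (d : ℕ) (c v : EuclideanSpace ℝ (Fin d)) (r : ℝ) :
    volume (closedBall c r) ≤
      2 * volume {y | y ∈ closedBall c r ∧ 0 ≤ (inner ℝ v (y - c) : ℝ)} := by
  set S : Set (EuclideanSpace ℝ (Fin d)) :=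
    {y | y ∈ closedBall c r ∧ 0 ≤ (inner ℝ v (y - c) : ℝ)} with hS
  set T : EuclideanSpace ℝ (Fin d) → EuclideanSpace ℝ (Fin d) :=
    fun y => (c + c) - y with hTdef
  have hT : MeasurePreserving T volume volume := by
    have h1 := Measure.measurePreserving_neg (volume : Measure (EuclideanSpace ℝ (Fin d)))
    have h2 := measurePreserving_add_left (volume : Measure (EuclideanSpace ℝ (Fin d))) (c + c)
    have := h2.comp h1
    convert this using 1
    funext y; rw [hTdef]; exact sub_eq_add_neg _ _
  have hSm : MeasurableSet S := by
    have hcont : Continuous fun y : EuclideanSpace ℝ (Fin d) => (inner ℝ v (y - c) : ℝ) := by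
      exact continuous_const.inner (continuous_id.sub continuous_const)
    exact measurableSet_closedBall.inter (measurableSet_le measurable_const hcont.measurable)
  have hsub : closedBall c r ⊆ S ∪ T ⁻¹' S := by
    intro y hy
    rcases le_or_gt 0 (inner ℝ v (y - c) : ℝ) with h | h
    · exact Or.inl ⟨hy, h⟩
    · refine Or.inr ⟨?_, ?_⟩
      · simp only [mem_closedBall, dist_eq_norm, hTdef]
        have : c + c - y - c = -(y - c) := by abel
        rw [show (c + c - y) - c = -(y - c) by abel, norm_neg]
        simpa [dist_eq_norm] using hy
      · rw [show (c + c - y) - c = -(y - c) by abel, inner_neg_right]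
        linarith
  calc volume (closedBall c r) ≤ volume (S ∪ T ⁻¹' S) := measure_mono hsub
    _ ≤ volume S + volume (T ⁻¹' S) := measure_union_le _ _
    _ = 2 * volume S := by
        rw [hT.measure_preimage hSm.nullMeasurableSet]; ring

/-- Lemma (√5-bigger): if `A = closedBall a r` (with `r > 0`) intersects a ball
`D = closedBall e s` of radius `s ≥ r` in `ℝ^d` (`d ≥ 1`), and `B = closedBall a (√5·r)`
is concentric with `A`, then the volume of `B ∩ D` is at least half the volume of `A`. -/
theorem stmt_1 (d : ℕ) (hd : 1 ≤ d) (a e : EuclideanSpace ℝ (Fin d)) (r s : ℝ)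
    (hr : 0 < r) (hs : r ≤ s)
    (hne : (closedBall a r ∩ closedBall e s).Nonempty) :
    volume (closedBall a r) ≤
      2 * volume (closedBall a (Real.sqrt 5 * r) ∩ closedBall e s) := by
  obtain ⟨x, hxA, hxD⟩ := hne
  rw [mem_closedBall, dist_eq_norm] at hxA hxD
  -- choose the center c of a radius-r ball inside D, close to a
  set D0 : ℝ := ‖x - e‖ with hD0
  have hD0nn : 0 ≤ D0 := norm_nonneg _
  set c : EuclideanSpace ℝ (Fin d) :=
    if D0 ≤ r then e else x + (r / D0) • (e - x) with hc
  have hce : ‖c - e‖ ≤ s - r := by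
    by_cases h : D0 ≤ r
    · simp [hc, h]; linarith
    · push_neg at h
      have hD0pos : 0 < D0 := lt_trans hr h
      have : c - e = (1 - r / D0) • (x - e) := by
        rw [hc, if_neg (not_le.mpr h)]
        module
      rw [this, norm_smul, Real.norm_eq_abs,
        abs_of_nonneg (by rw [sub_nonneg]; exact (div_le_one hD0pos).mpr h.le)]
      rw [← hD0]
      have : (1 - r / D0) * D0 = D0 - r := by field_simp
      rw [this]
      linarith
  have hac : ‖a - c‖ ≤ 2 * r := by
    by_cases h : D0 ≤ r
    · rw [hc, if_pos h]
      calc ‖a - e‖ = ‖(a - x) + (x - e)‖ := by congr 1; abel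
        _ ≤ ‖a - x‖ + ‖x - e‖ := norm_add_le _ _
        _ ≤ r + r := by
            rw [← norm_neg (a - x), neg_sub]; exact add_le_add hxA h
        _ = 2 * r := by ring
    · push_neg at h
      have hD0pos : 0 < D0 := lt_trans hr h
      have hcx : ‖c - x‖ = r := by
        rw [hc, if_neg (not_le.mpr h), add_sub_cancel_left, norm_smul, Real.norm_eq_abs,
          abs_of_nonneg (div_nonneg hr.le hD0nn)]
        rw [← norm_neg (e - x), neg_sub, ← hD0]
        field_simp
      calc ‖a - c‖ = ‖(a - x) - (c - x)‖ := by congr 1; abel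
        _ ≤ ‖a - x‖ + ‖c - x‖ := norm_sub_le _ _
        _ ≤ r + r := by
            rw [hcx, ← norm_neg (a - x), neg_sub]; exact add_le_add hxA le_rfl
        _ = 2 * r := by ring
  -- the favorable half of closedBall c r lies in B ∩ D
  have hsub : {y | y ∈ closedBall c r ∧ 0 ≤ (inner ℝ (a - c) (y - c) : ℝ)} ⊆
      closedBall a (Real.sqrt 5 * r) ∩ closedBall e s := by
    rintro y ⟨hy, hip⟩
    rw [mem_closedBall, dist_eq_norm] at hy
    constructor
    · rw [mem_closedBall, dist_eq_norm]
      have hsq : ‖y - a‖ ^ 2 ≤ 5 * r ^ 2 := by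
        have : y - a = (y - c) - (a - c) := by abel
        rw [this, norm_sub_sq_real]
        have h1 : ‖y - c‖ ^ 2 ≤ r ^ 2 := by
          apply sq_le_sq' _ hy; linarith [norm_nonneg (y - c)]
        have h2 : ‖a - c‖ ^ 2 ≤ (2 * r) ^ 2 := by
          apply sq_le_sq' _ hac; linarith [norm_nonneg (a - c)]
        have h3 : 0 ≤ (inner ℝ (y - c) (a - c) : ℝ) := by
          rwa [real_inner_comm]
        nlinarith
      calc ‖y - a‖ = Real.sqrt (‖y - a‖ ^ 2) := (Real.sqrt_sq (norm_nonneg _)).symm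
        _ ≤ Real.sqrt (5 * r ^ 2) := Real.sqrt_le_sqrt hsq
        _ = Real.sqrt 5 * r := by
            rw [Real.sqrt_mul (by norm_num), Real.sqrt_sq hr.le]
    · rw [mem_closedBall, dist_eq_norm]
      calc ‖y - e‖ = ‖(y - c) + (c - e)‖ := by congr 1; abel
        _ ≤ ‖y - c‖ + ‖c - e‖ := norm_add_le _ _
        _ ≤ r + (s - r) := add_le_add hy hce
        _ = s := by ring
  haveI : Nonempty (Fin d) := ⟨⟨0, hd⟩⟩
  calc volume (closedBall a r) = volume (closedBall c r) := by
        rw [EuclideanSpace.volume_closedBall, EuclideanSpace.volume_closedBall]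
    _ ≤ 2 * volume {y | y ∈ closedBall c r ∧ 0 ≤ (inner ℝ (a - c) (y - c) : ℝ)} :=
        half_ball_vol d c (a - c) r
    _ ≤ 2 * volume (closedBall a (Real.sqrt 5 * r) ∩ closedBall e s) := by
        exact mul_le_mul_right (measure_mono hsub) 2
end

section
/- Let A be a ball of radius r > 0 in ℝ^d, and let S be a finite collection of pairwise disjoint balls, each of radius at least r, each intersecting A. Then |S| ≤ 2·5^(d/2). -/
open Metric MeasureTheory
open scoped RealInnerProductSpace ENNReal

/-- If `A` is a ball of radius `r > 0` in `ℝ^d` (`d ≥ 1`), and `S` is a finite collection of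
pairwise disjoint balls (given by center–radius pairs), each of radius at least `r` and each
intersecting `A`, then `|S| ≤ 2·5^(d/2) = 2·(√5)^d`. -/
theorem stmt_2 (d : ℕ) (hd : 1 ≤ d) (a : EuclideanSpace ℝ (Fin d)) (r : ℝ) (hr : 0 < r)
    (S : Finset (EuclideanSpace ℝ (Fin d) × ℝ))
    (hrad : ∀ b ∈ S, r ≤ b.2)
    (hdisj : ∀ b ∈ S, ∀ b' ∈ S, b ≠ b' →
      closedBall b.1 b.2 ∩ closedBall b'.1 b'.2 = ∅)
    (hint : ∀ b ∈ S, (closedBall a r ∩ closedBall b.1 b.2).Nonempty) :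
    (S.card : ℝ) ≤ 2 * Real.sqrt 5 ^ d := by
  classical
  -- Step 1: for each ball in S, find a subball of radius r with center within 2r of a
  have key : ∀ b ∈ S, ∃ c' : EuclideanSpace ℝ (Fin d),
      dist c' a ≤ 2 * r ∧ closedBall c' r ⊆ closedBall b.1 b.2 := by
    intro b hb
    obtain ⟨x, hx1, hx2⟩ := hint b hb
    simp only [Set.mem_inter_iff, mem_closedBall] at hx1 hx2
    rcases le_or_gt (dist x b.1) r with hD | hD
    · refine ⟨b.1, ?_, closedBall_subset_closedBall (hrad b hb)⟩
      calc dist b.1 a ≤ dist b.1 x + dist x a := dist_triangle _ _ _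
        _ ≤ r + r := add_le_add (by rwa [dist_comm]) hx1
        _ = 2 * r := by ring
    · set D := dist x b.1 with hDdef
      have hD0 : (0:ℝ) < D := hr.trans hD
      have hnorm : ‖b.1 - x‖ = D := by rw [hDdef, dist_comm, dist_eq_norm]
      have h1 : dist (x + (r / D) • (b.1 - x)) x = r := by
        rw [dist_eq_norm, add_sub_cancel_left, norm_smul, Real.norm_eq_abs,
          abs_of_nonneg (by positivity), hnorm]
        field_simp
      refine ⟨x + (r / D) • (b.1 - x), ?_, ?_⟩
      · calc dist (x + (r / D) • (b.1 - x)) a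
            ≤ dist (x + (r / D) • (b.1 - x)) x + dist x a := dist_triangle _ _ _
          _ ≤ r + r := add_le_add h1.le hx1
          _ = 2 * r := by ring
      · have h2 : dist (x + (r / D) • (b.1 - x)) b.1 = D - r := by
          have e : x + (r / D) • (b.1 - x) - b.1 = (r / D - 1) • (b.1 - x) := by
            rw [sub_smul, one_smul]; abel
          rw [dist_eq_norm, e, norm_smul, Real.norm_eq_abs, hnorm,
            abs_of_neg (by rw [sub_neg, div_lt_one hD0]; exact hD)]
          field_simp
          ring
        intro y hy
        simp only [mem_closedBall] at hy ⊢
        calc dist y b.1 ≤ dist y (x + (r / D) • (b.1 - x))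
              + dist (x + (r / D) • (b.1 - x)) b.1 := dist_triangle _ _ _
          _ ≤ r + (D - r) := add_le_add hy h2.le
          _ = D := by ring
          _ ≤ b.2 := hx2
  choose! f hfa hfs using key
  -- half-balls
  set T : EuclideanSpace ℝ (Fin d) × ℝ → Set (EuclideanSpace ℝ (Fin d)) :=
    fun b => closedBall (f b) r ∩ {y | 0 ≤ ⟪a - f b, y - f b⟫} with hTdef
  have hTmeas : ∀ b, MeasurableSet (T b) := by
    intro b
    exact measurableSet_closedBall.inter
      (measurableSet_le measurable_const
        ((continuous_const.inner (continuous_id.sub continuous_const)).measurable))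
  -- each half-ball has at least half the volume of a radius-r ball
  have hhalf : ∀ b, volume (closedBall (f b) r) ≤ 2 * volume (T b) := by
    intro b
    set c := f b with hc
    set T' : Set (EuclideanSpace ℝ (Fin d)) :=
      closedBall c r ∩ {y | ⟪a - c, y - c⟫ ≤ 0} with hT'def
    have hcover : closedBall c r ⊆ T b ∪ T' := by
      intro y hy
      rcases le_total 0 ⟪a - c, y - c⟫ with h | h
      · exact Or.inl ⟨hy, h⟩
      · exact Or.inr ⟨hy, h⟩
    have hmp : MeasurePreserving (fun y : EuclideanSpace ℝ (Fin d) => c + c - y)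
        volume volume := by
      have : (fun y : EuclideanSpace ℝ (Fin d) => c + c - y)
          = (fun z => c + c + z) ∘ Neg.neg := by
        funext y; simp [sub_eq_add_neg]
      rw [this]
      exact (measurePreserving_add_left volume (c + c)).comp
        (Measure.measurePreserving_neg volume)
    have hpre : (fun y : EuclideanSpace ℝ (Fin d) => c + c - y) ⁻¹' (T b) = T' := by
      ext y
      simp only [hTdef, hT'def, Set.mem_preimage, Set.mem_inter_iff, mem_closedBall,
        Set.mem_setOf_eq, ← hc]
      constructor
      · rintro ⟨h1, h2⟩
        refine ⟨?_, ?_⟩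
        · rwa [dist_eq_norm, show c + c - y - c = -(y - c) by abel, norm_neg,
            ← dist_eq_norm] at h1
        · rw [show c + c - y - c = -(y - c) by abel, inner_neg_right] at h2
          linarith
      · rintro ⟨h1, h2⟩
        refine ⟨?_, ?_⟩
        · rwa [dist_eq_norm, show c + c - y - c = -(y - c) by abel, norm_neg,
            ← dist_eq_norm]
        · rw [show c + c - y - c = -(y - c) by abel, inner_neg_right]
          linarith
    have hT' : volume T' = volume (T b) := by
      rw [← hpre]
      exact hmp.measure_preimage (hTmeas b).nullMeasurableSet
    calc volume (closedBall c r) ≤ volume (T b ∪ T') := measure_mono hcover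
      _ ≤ volume (T b) + volume T' := measure_union_le _ _
      _ = 2 * volume (T b) := by rw [hT', two_mul]
  -- each half-ball is inside the big ball of radius √5 * r around a
  have hbig : ∀ b ∈ S, T b ⊆ closedBall a (Real.sqrt 5 * r) := by
    intro b hb y hy
    obtain ⟨hy1, hy2⟩ := hy
    simp only [mem_closedBall] at hy1 ⊢
    set c := f b with hc
    have h1 : ‖y - c‖ ≤ r := by rwa [← dist_eq_norm]
    have h2 : ‖a - c‖ ≤ 2 * r := by rw [← dist_eq_norm, dist_comm]; exact hfa b hb
    have hsq : ‖y - a‖ ^ 2 ≤ 5 * r ^ 2 := by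
      have e : y - a = (y - c) - (a - c) := by abel
      rw [e, norm_sub_sq_real]
      have hinner : (0:ℝ) ≤ ⟪y - c, a - c⟫ := by
        rw [real_inner_comm]; exact hy2
      have hn1 : ‖y - c‖ ^ 2 ≤ r ^ 2 := by
        apply sq_le_sq' _ h1; linarith [norm_nonneg (y - c)]
      have hn2 : ‖a - c‖ ^ 2 ≤ (2 * r) ^ 2 := by
        apply sq_le_sq' _ h2; linarith [norm_nonneg (a - c)]
      nlinarith
    have : dist y a = ‖y - a‖ := dist_eq_norm _ _
    rw [this]
    have := Real.sqrt_le_sqrt hsq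
    rwa [Real.sqrt_sq (norm_nonneg _), show (5:ℝ) * r ^ 2 = (Real.sqrt 5 * r) ^ 2 by
      rw [mul_pow, Real.sq_sqrt (by norm_num)], Real.sqrt_sq (by positivity)] at this
  -- half-balls are pairwise disjoint
  have hTdisj : (S : Set (EuclideanSpace ℝ (Fin d) × ℝ)).PairwiseDisjoint T := by
    intro b hb b' hb' hne
    have h := hdisj b hb b' hb' hne
    simp only [Function.onFun]
    rw [Set.disjoint_iff_inter_eq_empty]
    apply Set.eq_empty_of_subset_empty
    calc T b ∩ T b' ⊆ closedBall b.1 b.2 ∩ closedBall b'.1 b'.2 :=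
          Set.inter_subset_inter ((Set.inter_subset_left).trans (hfs b hb))
            ((Set.inter_subset_left).trans (hfs b' hb'))
      _ = ∅ := h
  -- volume computations
  set v1 := volume (ball (0 : EuclideanSpace ℝ (Fin d)) 1) with hv1def
  have hfinrank : Module.finrank ℝ (EuclideanSpace ℝ (Fin d)) = d := finrank_euclideanSpace_fin
  have hvball : ∀ x : EuclideanSpace ℝ (Fin d), volume (closedBall x r)
      = ENNReal.ofReal (r ^ d) * v1 := by
    intro x
    rw [hv1def, Measure.addHaar_closedBall volume x hr.le, hfinrank]
  have hvbig : volume (closedBall a (Real.sqrt 5 * r))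
      = ENNReal.ofReal ((Real.sqrt 5 * r) ^ d) * v1 := by
    rw [hv1def, Measure.addHaar_closedBall volume a (by positivity), hfinrank]
  have hv1pos : v1 ≠ 0 := (measure_ball_pos volume _ one_pos).ne'
  have hv1top : v1 ≠ ⊤ := measure_ball_lt_top.ne
  -- main chain
  have hchain : (S.card : ℝ≥0∞) * (ENNReal.ofReal (r ^ d) * v1)
      ≤ 2 * (ENNReal.ofReal ((Real.sqrt 5 * r) ^ d) * v1) := by
    rw [show (S.card : ℝ≥0∞) * (ENNReal.ofReal (r ^ d) * v1)
        = ∑ _b ∈ S, ENNReal.ofReal (r ^ d) * v1 by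
          rw [Finset.sum_const, nsmul_eq_mul]]
    calc ∑ _b ∈ S, ENNReal.ofReal (r ^ d) * v1
        ≤ ∑ b ∈ S, 2 * volume (T b) := by
          apply Finset.sum_le_sum
          intro b hb
          rw [← hvball (f b)]
          exact hhalf b
      _ = 2 * ∑ b ∈ S, volume (T b) := by rw [Finset.mul_sum]
      _ = 2 * volume (⋃ b ∈ S, T b) := by
          rw [measure_biUnion_finset hTdisj (fun b _ => hTmeas b)]
      _ ≤ 2 * volume (closedBall a (Real.sqrt 5 * r)) := by
          apply mul_le_mul_right
          apply measure_mono
          exact Set.iUnion₂_subset hbig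
      _ = 2 * (ENNReal.ofReal ((Real.sqrt 5 * r) ^ d) * v1) := by rw [hvbig]
  rw [← mul_assoc, ← mul_assoc] at hchain
  have hchain2 : (S.card : ℝ≥0∞) * ENNReal.ofReal (r ^ d)
      ≤ 2 * ENNReal.ofReal ((Real.sqrt 5 * r) ^ d) :=
    (ENNReal.mul_le_mul_iff_left hv1pos hv1top).mp hchain
  rw [← ENNReal.ofReal_natCast, ← ENNReal.ofReal_mul (by positivity),
    show (2:ℝ≥0∞) = ENNReal.ofReal 2 by norm_num,
    ← ENNReal.ofReal_mul (by norm_num)] at hchain2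
  have hreal : (S.card : ℝ) * r ^ d ≤ 2 * (Real.sqrt 5 * r) ^ d :=
    (ENNReal.ofReal_le_ofReal_iff (by positivity)).mp hchain2
  rw [mul_pow, ← mul_assoc] at hreal
  exact le_of_mul_le_mul_right hreal (pow_pos hr d)
end

section
/- Let B be a finite collection of n balls in ℝ^d whose intersection graph is triangle-free (in particular, if it is bipartite). Then the intersection graph has at most 2·5^(d/2)·n edges. -/
open Metric MeasureTheory Pointwise ENNReal Finset

private lemma inter_nonempty_of_dist_le' {V : Type*} [NormedAddCommGroup V] [NormedSpace ℝ V]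
    {x y : V} {a b : ℝ} (ha : 0 ≤ a) (hb : 0 ≤ b) (h : dist x y ≤ a + b) :
    (closedBall x a ∩ closedBall y b).Nonempty := by
  rcases eq_or_lt_of_le (add_nonneg ha hb) with h0 | h0
  · exact ⟨x, mem_closedBall_self ha, by rw [mem_closedBall]; linarith⟩
  · have hab : a + b ≠ 0 := ne_of_gt h0
    refine ⟨AffineMap.lineMap x y (a / (a + b)), ?_, ?_⟩
    · rw [mem_closedBall, dist_lineMap_left,
        Real.norm_of_nonneg (by positivity)]
      calc a / (a + b) * dist x y ≤ a / (a + b) * (a + b) := by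
            apply mul_le_mul_of_nonneg_left h (by positivity)
        _ = a := div_mul_cancel₀ _ hab
    · rw [mem_closedBall, dist_lineMap_right,
        Real.norm_of_nonneg (by rw [sub_nonneg]; exact div_le_one_of_le₀ (by linarith) h0.le),
        show 1 - a / (a + b) = b / (a + b) by field_simp; ring]
      calc b / (a + b) * dist x y ≤ b / (a + b) * (a + b) := by
            apply mul_le_mul_of_nonneg_left h (by positivity)
        _ = b := div_mul_cancel₀ _ hab

/-- Packing lemma: if a family of pairwise disjoint closed balls of radius `r0` in `ℝ^d`
has all centers within distance `2 * r0` of a point `c0`, then there are at most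
`2 * √5 ^ d` of them. -/
private lemma half_ball_card {d : ℕ} {ι : Type*} (S : Finset ι)
    (c0 : EuclideanSpace ℝ (Fin d)) {r0 : ℝ} (hr0 : 0 < r0)
    (x : ι → EuclideanSpace ℝ (Fin d))
    (hx : ∀ j ∈ S, dist c0 (x j) ≤ 2 * r0)
    (hdisj : ∀ j ∈ S, ∀ k ∈ S, j ≠ k →
      Disjoint (closedBall (x j) r0) (closedBall (x k) r0)) :
    (S.card : ℝ) ≤ 2 * Real.sqrt 5 ^ d := by
  classical
  set μ : Measure (EuclideanSpace ℝ (Fin d)) := volume with hμ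
  set V : ℝ≥0∞ := μ (ball (0 : EuclideanSpace ℝ (Fin d)) 1) with hV
  set A : ι → Set (EuclideanSpace ℝ (Fin d)) := fun j =>
    closedBall (0 : EuclideanSpace ℝ (Fin d)) r0 ∩ {v | (inner ℝ v (x j - c0) : ℝ) ≤ 0} with hA
  set H : ι → Set (EuclideanSpace ℝ (Fin d)) := fun j => x j +ᵥ A j with hH
  have hAmeas : ∀ j, MeasurableSet (A j) := by
    intro j
    exact measurableSet_closedBall.inter
      (measurableSet_le (continuous_id.inner continuous_const).measurable measurable_const)
  have hHmeas : ∀ j, MeasurableSet (H j) := fun j => (hAmeas j).const_vadd (x j)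
  have hHsub : ∀ j, H j ⊆ closedBall (x j) r0 := by
    intro j y hy
    obtain ⟨v, hv, rfl⟩ := hy
    simp only [vadd_eq_add]
    rw [mem_closedBall, dist_eq_norm, add_sub_cancel_left]
    simpa [mem_closedBall_zero_iff] using hv.1
  have hHbig : ∀ j ∈ S, H j ⊆ closedBall c0 (Real.sqrt 5 * r0) := by
    intro j hj y hy
    obtain ⟨v, hv, rfl⟩ := hy
    obtain ⟨hv1, hv2⟩ := hv
    rw [mem_closedBall_zero_iff] at hv1
    have hv2' : (inner ℝ v (x j - c0) : ℝ) ≤ 0 := hv2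
    have hw : ‖x j - c0‖ ≤ 2 * r0 := by
      rw [← dist_eq_norm, dist_comm]; exact hx j hj
    have hsq : ‖v + (x j - c0)‖ ^ 2 ≤ 5 * r0 ^ 2 := by
      have hns := norm_add_sq_real v (x j - c0)
      nlinarith [norm_nonneg v, norm_nonneg (x j - c0)]
    have h5 : ‖v + (x j - c0)‖ ≤ Real.sqrt 5 * r0 := by
      have h' := Real.sqrt_le_sqrt hsq
      rwa [Real.sqrt_sq (norm_nonneg _),
        show (5 : ℝ) * r0 ^ 2 = (Real.sqrt 5 * r0) ^ 2 by
          rw [mul_pow, Real.sq_sqrt (by norm_num : (0:ℝ) ≤ 5)]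
        , Real.sqrt_sq (by positivity)] at h'
    simp only [vadd_eq_add]
    rw [mem_closedBall, dist_eq_norm]
    calc ‖x j + v - c0‖ = ‖v + (x j - c0)‖ := by congr 1; abel
      _ ≤ Real.sqrt 5 * r0 := h5
  have hHhalf : ∀ j, μ (closedBall (0 : EuclideanSpace ℝ (Fin d)) r0) ≤ 2 * μ (H j) := by
    intro j
    have hvadd : μ (H j) = μ (A j) := measure_vadd (μ := volume) (x j) (A j)
    have hneg : μ (-(A j)) = μ (A j) := Measure.measure_neg volume (A j)
    have hcover : closedBall (0 : EuclideanSpace ℝ (Fin d)) r0 ⊆ A j ∪ -(A j) := by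
      intro v hv
      rcases le_total (inner ℝ v (x j - c0) : ℝ) 0 with h | h
      · exact Or.inl ⟨hv, h⟩
      · refine Or.inr ?_
        rw [Set.mem_neg]
        refine ⟨?_, ?_⟩
        · rw [mem_closedBall_zero_iff, norm_neg, ← mem_closedBall_zero_iff]; exact hv
        · show (inner ℝ (-v) (x j - c0) : ℝ) ≤ 0
          rw [inner_neg_left]; linarith
    calc μ (closedBall (0 : EuclideanSpace ℝ (Fin d)) r0) ≤ μ (A j ∪ -(A j)) :=
          measure_mono hcover
      _ ≤ μ (A j) + μ (-(A j)) := measure_union_le _ _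
      _ = 2 * μ (H j) := by rw [hneg, hvadd, two_mul]
  have hdisjH : (↑S : Set ι).PairwiseDisjoint H := fun j hj k hk hne =>
    (hdisj j hj k hk hne).mono (hHsub j) (hHsub k)
  have hsum : (S.card : ℝ≥0∞) * μ (closedBall (0 : EuclideanSpace ℝ (Fin d)) r0)
      ≤ 2 * μ (closedBall c0 (Real.sqrt 5 * r0)) := by
    calc (S.card : ℝ≥0∞) * μ (closedBall (0 : EuclideanSpace ℝ (Fin d)) r0)
        = ∑ _j ∈ S, μ (closedBall (0 : EuclideanSpace ℝ (Fin d)) r0) := by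
          rw [Finset.sum_const, nsmul_eq_mul]
      _ ≤ ∑ j ∈ S, 2 * μ (H j) := Finset.sum_le_sum fun j _ => hHhalf j
      _ = 2 * ∑ j ∈ S, μ (H j) := (Finset.mul_sum _ _ _).symm
      _ = 2 * μ (⋃ j ∈ S, H j) := by
          rw [measure_biUnion_finset hdisjH fun j _ => hHmeas j]
      _ ≤ 2 * μ (closedBall c0 (Real.sqrt 5 * r0)) := by
          gcongr
          exact Set.iUnion₂_subset hHbig
  rw [μ.addHaar_closedBall _ hr0.le, μ.addHaar_closedBall _ (by positivity),
    finrank_euclideanSpace_fin] at hsum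
  have hV0 : V ≠ 0 := (measure_ball_pos μ _ one_pos).ne'
  have hVt : V ≠ ⊤ := measure_ball_lt_top.ne
  have hr0d0 : ENNReal.ofReal (r0 ^ d) ≠ 0 := by
    rw [Ne, ENNReal.ofReal_eq_zero, not_le]; positivity
  have hr0dt : ENNReal.ofReal (r0 ^ d) ≠ ⊤ := ENNReal.ofReal_ne_top
  have key : (S.card : ℝ≥0∞) ≤ ENNReal.ofReal (2 * Real.sqrt 5 ^ d) := by
    have h1 : (S.card : ℝ≥0∞) * (ENNReal.ofReal (r0 ^ d) * V)
        ≤ ENNReal.ofReal (2 * Real.sqrt 5 ^ d) * (ENNReal.ofReal (r0 ^ d) * V) := by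
      refine hsum.trans_eq ?_
      rw [show (Real.sqrt 5 * r0) ^ d = Real.sqrt 5 ^ d * r0 ^ d from mul_pow _ _ _,
        ENNReal.ofReal_mul (by positivity), ENNReal.ofReal_mul (by norm_num : (0:ℝ) ≤ 2),
        ENNReal.ofReal_ofNat]
      ring
    exact (ENNReal.mul_le_mul_iff_left (mul_ne_zero hr0d0 hV0)
      (ENNReal.mul_ne_top hr0dt hVt)).1 h1
  rw [← ENNReal.ofReal_natCast] at key
  exact (ENNReal.ofReal_le_ofReal_iff (by positivity)).1 key

/-- If the intersection graph of `n` balls in `ℝ^d` is triangle-free (in particular,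
if it is bipartite), then it has at most `2·5^(d/2)·n = 2·(√5)^d·n` edges. -/
theorem stmt_3 (d n : ℕ) (c : Fin n → EuclideanSpace ℝ (Fin d)) (r : Fin n → ℝ)
    (G : SimpleGraph (Fin n)) [Fintype G.edgeSet]
    (hadj : ∀ i j, G.Adj i j ↔
      i ≠ j ∧ (closedBall (c i) (r i) ∩ closedBall (c j) (r j)).Nonempty)
    (htf : G.CliqueFree 3) :
    (G.edgeFinset.card : ℝ) ≤ 2 * Real.sqrt 5 ^ d * n := by
  classical
  set N : Fin n → Finset (Fin n) := fun i =>
    Finset.univ.filter (fun j => G.Adj i j ∧ (r i < r j ∨ (r i = r j ∧ i < j))) with hN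
  have hNmem : ∀ i j, j ∈ N i ↔ (G.Adj i j ∧ (r i < r j ∨ (r i = r j ∧ i < j))) := by
    intro i j; simp [hN]
  have hBdisj : ∀ i j k : Fin n, G.Adj i j → G.Adj i k → j ≠ k →
      Disjoint (closedBall (c j) (r j)) (closedBall (c k) (r k)) := by
    intro i j k hij hik hjk
    rw [Set.disjoint_iff_inter_eq_empty, ← Set.not_nonempty_iff_eq_empty]
    intro hne
    exact htf {i, j, k} (SimpleGraph.is3Clique_triple_iff.2 ⟨hij, hik, (hadj j k).2 ⟨hjk, hne⟩⟩)
  have hdist : ∀ i j, G.Adj i j → dist (c i) (c j) ≤ r i + r j := by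
    intro i j hij
    obtain ⟨-, hne⟩ := (hadj i j).1 hij
    exact dist_le_add_of_nonempty_closedBall_inter_closedBall hne
  have hrnn : ∀ i j, G.Adj i j → 0 ≤ r i := by
    intro i j hij
    obtain ⟨-, p, hpi, -⟩ := (hadj i j).1 hij
    exact dist_nonneg.trans (mem_closedBall.1 hpi)
  have hdeg : ∀ i : Fin n, ((N i).card : ℝ) ≤ 2 * Real.sqrt 5 ^ d := by
    intro i
    have h15 : (1 : ℝ) ≤ Real.sqrt 5 := by
      rw [show (1:ℝ) = Real.sqrt 1 from Real.sqrt_one.symm]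
      exact Real.sqrt_le_sqrt (by norm_num)
    have h1pow : (1 : ℝ) ≤ Real.sqrt 5 ^ d := one_le_pow₀ h15
    rcases lt_trichotomy (r i) 0 with hri | hri | hri
    · have hNe : N i = ∅ := by
        rw [Finset.eq_empty_iff_forall_notMem]
        intro j hj
        exact absurd (hrnn i j ((hNmem i j).1 hj).1) (not_le.2 hri)
      rw [hNe]
      simp

    · have hcard : (N i).card ≤ 1 := by
        rw [Finset.card_le_one]
        intro j hj k hk
        by_contra hjk
        have hij := ((hNmem i j).1 hj).1
        have hik := ((hNmem i k).1 hk).1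
        have hd := hBdisj i j k hij hik hjk
        have hmemB : ∀ m : Fin n, G.Adj i m → c i ∈ closedBall (c m) (r m) := by
          intro m him
          obtain ⟨-, p, hpi, hpm⟩ := (hadj i m).1 him
          have hp : p = c i := by
            have := mem_closedBall.1 hpi
            rw [hri] at this
            exact dist_le_zero.1 this
          rwa [hp] at hpm
        exact Set.disjoint_left.1 hd (hmemB j hij) (hmemB k hik)
      calc ((N i).card : ℝ) ≤ 1 := by exact_mod_cast hcard
        _ ≤ 2 * Real.sqrt 5 ^ d := by linarith
    · -- main case : 0 < r i
      set D : Fin n → ℝ := fun j => dist (c i) (c j) with hD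
      set t : Fin n → ℝ := fun j => min 1 (2 * r i / D j) with ht
      set x : Fin n → EuclideanSpace ℝ (Fin d) := fun j =>
        AffineMap.lineMap (c i) (c j) (t j) with hx
      have hDnn : ∀ j, 0 ≤ D j := fun j => dist_nonneg
      have ht0 : ∀ j, 0 ≤ t j := by
        intro j
        rw [ht]
        exact le_min (by norm_num) (by positivity)
      have ht1 : ∀ j, t j ≤ 1 := fun j => min_le_left _ _
      have htD : ∀ j, t j * D j = min (D j) (2 * r i) := by
        intro j
        rcases eq_or_lt_of_le (hDnn j) with h0 | h0
        · rw [← h0, mul_zero, min_eq_left (by positivity)]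
        · rw [ht]
          dsimp only
          rcases le_total (2 * r i / D j) 1 with hle | hle
          · rw [min_eq_right hle, div_mul_cancel₀ _ (ne_of_gt h0),
              min_eq_right ((div_le_one h0).1 hle)]
          · rw [min_eq_left hle, one_mul, min_eq_left ((one_le_div h0).1 hle)]
      have hxc : ∀ j, dist (c i) (x j) ≤ 2 * r i := by
        intro j
        rw [dist_comm]
        have hdx : dist (x j) (c i) = t j * D j := by
          rw [hx]
          dsimp only
          rw [dist_lineMap_left, Real.norm_of_nonneg (ht0 j)]
        rw [hdx, htD j]
        exact min_le_right _ _
      have hsubB : ∀ j ∈ N i, closedBall (x j) (r i) ⊆ closedBall (c j) (r j) := by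
        intro j hj
        obtain ⟨hij, hor⟩ := (hNmem i j).1 hj
        have hrij : r i ≤ r j := by rcases hor with h | ⟨h, -⟩ <;> linarith
        have hDj : D j ≤ r i + r j := hdist i j hij
        apply closedBall_subset_closedBall'
        have hdx : dist (x j) (c j) = (1 - t j) * D j := by
          rw [hx]
          dsimp only
          rw [dist_lineMap_right, Real.norm_of_nonneg (by linarith [ht1 j])]
        rw [hdx]
        have h2 := htD j
        rcases min_cases (D j) (2 * r i) with ⟨hm, hc⟩ | ⟨hm, hc⟩ <;>
          rw [hm] at h2 <;> nlinarith [hDnn j]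
      have hdisjI : ∀ j ∈ N i, ∀ k ∈ N i, j ≠ k →
          Disjoint (closedBall (x j) (r i)) (closedBall (x k) (r i)) := by
        intro j hj k hk hjk
        exact (hBdisj i j k ((hNmem i j).1 hj).1 ((hNmem i k).1 hk).1 hjk).mono
          (hsubB j hj) (hsubB k hk)
      exact half_ball_card (N i) (c i) hri x (fun j _ => hxc j) hdisjI
  -- double counting via orientation towards larger radius
  set T : Finset ((_ : Fin n) × Fin n) := Finset.univ.sigma N with hT
  have hsurj : Set.SurjOn (fun p : (_ : Fin n) × Fin n => s(p.1, p.2)) ↑T ↑G.edgeFinset := by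
    intro e he
    induction e using Sym2.ind with
    | _ i j =>
      rw [Finset.mem_coe, SimpleGraph.mem_edgeFinset, SimpleGraph.mem_edgeSet] at he
      have hne : i ≠ j := he.ne
      have hmem : ∀ a b : Fin n, G.Adj a b → (r a < r b ∨ (r a = r b ∧ a < b)) →
          (⟨a, b⟩ : (_ : Fin n) × Fin n) ∈ T := by
        intro a b hab hor
        rw [hT, Finset.mem_sigma]
        exact ⟨Finset.mem_univ _, (hNmem a b).2 ⟨hab, hor⟩⟩
      rcases lt_trichotomy (r i) (r j) with h | h | h
      · exact ⟨⟨i, j⟩, hmem i j he (Or.inl h), rfl⟩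
      · rcases hne.lt_or_gt with h' | h'
        · exact ⟨⟨i, j⟩, hmem i j he (Or.inr ⟨h, h'⟩), rfl⟩
        · exact ⟨⟨j, i⟩, hmem j i he.symm (Or.inr ⟨h.symm, h'⟩), Sym2.eq_swap⟩
      · exact ⟨⟨j, i⟩, hmem j i he.symm (Or.inl h), Sym2.eq_swap⟩
  have hcount : G.edgeFinset.card ≤ ∑ i, (N i).card := by
    have h := Finset.card_le_card_of_surjOn _ hsurj
    rwa [hT, Finset.card_sigma] at h
  calc (G.edgeFinset.card : ℝ) ≤ ∑ i : Fin n, ((N i).card : ℝ) := by exact_mod_cast hcount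
    _ ≤ ∑ _i : Fin n, 2 * Real.sqrt 5 ^ d := Finset.sum_le_sum fun i _ => hdeg i
    _ = 2 * Real.sqrt 5 ^ d * n := by
        rw [Finset.sum_const, Finset.card_univ, Fintype.card_fin, nsmul_eq_mul, mul_comm]
end

section
/- Let A, D be two intersecting closed balls in ℝ^d with radius of D at least the radius r of A. Then there exist a translate D + v of D that is externally tangent to A (i.e., dist of centers = r + radius(D)) and a ball C of radius r tangent to A with C ⊆ D + v such that for any ball B concentric with A, volume(B ∩ D) ≥ volume(B ∩ C). -/
open MeasureTheory Metric

open scoped RealInnerProductSpace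

set_option maxHeartbeats 1000000 in
/-- Let `A = closedBall a r` (with `r > 0`) and `D = closedBall e s` be intersecting balls in
`ℝ^d` (`d ≥ 1`) with `s ≥ r`. Then there is a translate `D + v` of `D` externally tangent to `A`
(distance of centers equal to `r + s`) and a ball `C` of radius `r` tangent to `A` with
`C ⊆ D + v`, such that for every ball `B = closedBall a ρ` concentric with `A`,
`volume (B ∩ D) ≥ volume (B ∩ C)`. -/
theorem stmt_7 (d : ℕ) (hd : 1 ≤ d) (a e : EuclideanSpace ℝ (Fin d)) (r s : ℝ)
    (hr : 0 < r) (hs : r ≤ s)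
    (hne : (closedBall a r ∩ closedBall e s).Nonempty) :
    ∃ v : EuclideanSpace ℝ (Fin d),
      dist a (e + v) = r + s ∧
      ∃ c : EuclideanSpace ℝ (Fin d),
        dist a c = 2 * r ∧
        closedBall c r ⊆ closedBall (e + v) s ∧
        ∀ ρ : ℝ, volume (closedBall a ρ ∩ closedBall c r) ≤
          volume (closedBall a ρ ∩ closedBall e s) := by
  classical
  have hd0 : 0 < d := hd
  set u : EuclideanSpace ℝ (Fin d) :=
    if e = a then EuclideanSpace.single ⟨0, hd0⟩ (1:ℝ) else ‖e - a‖⁻¹ • (e - a) with hu_def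
  have hu : ‖u‖ = 1 := by
    rw [hu_def]
    split_ifs with h
    · simp
    · rw [norm_smul, norm_inv, norm_norm, inv_mul_cancel₀]
      exact norm_ne_zero_iff.mpr (sub_ne_zero.mpr h)
  set m := dist a e with hm
  have hm0 : 0 ≤ m := dist_nonneg
  have hmle : m ≤ r + s := by
    obtain ⟨x, hxA, hxD⟩ := hne
    have h1 : dist x a ≤ r := mem_closedBall.mp hxA
    have h2 : dist x e ≤ s := mem_closedBall.mp hxD
    calc m ≤ dist a x + dist x e := dist_triangle a x e
      _ ≤ r + s := by rw [dist_comm a x]; exact add_le_add h1 h2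
  set lam : ℝ := max 0 (2*r - m) with hlam_def
  have hlam0 : 0 ≤ lam := le_max_left _ _
  have hlam2r : lam ≤ 2*r := by
    rcases le_total (2*r - m) 0 with h | h
    · rw [hlam_def, max_eq_left h]; linarith
    · rw [hlam_def, max_eq_right h]; linarith
  have h2rlam : 2*r - lam = min (2*r) m := by
    rcases le_total (2*r) m with h | h
    · rw [hlam_def, max_eq_left (by linarith : 2*r - m ≤ 0), min_eq_left h]; ring
    · rw [hlam_def, max_eq_right (by linarith : (0:ℝ) ≤ 2*r - m), min_eq_right h]; ring
  -- key: the center c shifted back by lam lands within s - r of e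
  have hkey : dist (a + (min (2*r) m) • u) e ≤ s - r := by
    by_cases he : e = a
    · have hm0' : m = 0 := by rw [hm, he]; simp
      rw [hm0', min_eq_right (by linarith : (0:ℝ) ≤ 2*r)]
      simp [he]; linarith
    · have hmnorm : m = ‖e - a‖ := by rw [hm, dist_eq_norm, ← norm_neg]; congr 1; abel
      have hmpos : 0 < m := by
        rw [hmnorm]; exact norm_pos_iff.mpr (sub_ne_zero.mpr he)
      have huval : u = ‖e - a‖⁻¹ • (e - a) := by rw [hu_def, if_neg he]
      set t' : ℝ := (min (2*r) m) * m⁻¹ with ht'_def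
      have hpt : a + (min (2*r) m) • u = a + t' • (e - a) := by
        rw [huval, smul_smul, ht'_def, hmnorm]
      rw [hpt, dist_eq_norm]
      have : a + t' • (e - a) - e = (t' - 1) • (e - a) := by
        rw [sub_smul, one_smul]; abel
      rw [this, norm_smul, ← hmnorm, Real.norm_eq_abs]
      have ht'le : t' ≤ 1 := by
        rw [ht'_def]
        have : min (2*r) m ≤ m := min_le_right _ _
        calc (min (2*r) m) * m⁻¹ ≤ m * m⁻¹ :=
              mul_le_mul_of_nonneg_right this (by positivity)
          _ = 1 := mul_inv_cancel₀ (ne_of_gt hmpos)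
      have habs : |t' - 1| = 1 - t' := by rw [abs_of_nonpos (by linarith)]; ring
      rw [habs]
      have hmin : min (2*r) m = t' * m := by
        rw [ht'_def, mul_assoc, inv_mul_cancel₀ (ne_of_gt hmpos), mul_one]
      have : m - min (2*r) m ≤ s - r := by
        rcases min_cases (2*r) m with ⟨h1, h2⟩ | ⟨h1, h2⟩ <;> rw [h1] <;> linarith
      rw [hmin] at this
      linarith [this]
  refine ⟨a + (r+s) • u - e, ?_, a + (2*r) • u, ?_, ?_, ?_⟩
  · have : e + (a + (r+s) • u - e) = a + (r+s) • u := by abel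
    rw [this, dist_eq_norm]
    have : a - (a + (r+s) • u) = -((r+s) • u) := by abel
    rw [this, norm_neg, norm_smul, hu, Real.norm_eq_abs, abs_of_nonneg (by linarith), mul_one]
  · rw [dist_eq_norm]
    have : a - (a + (2*r) • u) = -((2*r) • u) := by abel
    rw [this, norm_neg, norm_smul, hu, Real.norm_eq_abs, abs_of_nonneg (by linarith), mul_one]
  · intro x hx
    have hxc : dist x (a + (2*r) • u) ≤ r := mem_closedBall.mp hx
    have he' : e + (a + (r+s) • u - e) = a + (r+s) • u := by abel
    rw [mem_closedBall, he']
    have hcc : dist (a + (2*r) • u) (a + (r+s) • u) = s - r := by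
      rw [dist_eq_norm]
      have : a + (2*r) • u - (a + (r+s) • u) = (2*r - (r+s)) • u := by
        rw [sub_smul]; abel
      rw [this, norm_smul, hu, Real.norm_eq_abs, mul_one, abs_of_nonpos (by linarith)]
      ring
    calc dist x (a + (r+s) • u) ≤ dist x (a + (2*r) • u) + dist (a + (2*r) • u) (a + (r+s) • u) :=
          dist_triangle _ _ _
      _ ≤ r + (s - r) := add_le_add hxc (le_of_eq hcc)
      _ = s := by ring
  · intro ρ
    set c : EuclideanSpace ℝ (Fin d) := a + (2*r) • u with hc_def
    have hsub : closedBall a ρ ∩ closedBall c r ⊆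
        (fun x => x + (-(lam • u))) ⁻¹' (closedBall a ρ ∩ closedBall e s) := by
      rintro x ⟨hxB, hxC⟩
      have hxa : dist x a ≤ ρ := mem_closedBall.mp hxB
      have hxc : dist x c ≤ r := mem_closedBall.mp hxC
      have hρ : 0 ≤ ρ := le_trans dist_nonneg hxa
      constructor
      · -- stays in B
        show dist (x + -(lam • u)) a ≤ ρ
        have hinner : r ≤ ⟪x - a, u⟫ := by
          have hxdec : x - a = (x - c) + ((2*r) • u) := by rw [hc_def]; abel
          rw [hxdec, inner_add_left, real_inner_smul_left, real_inner_self_eq_norm_sq, hu]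
          have h1 : |⟪x - c, u⟫| ≤ ‖x - c‖ * ‖u‖ := abs_real_inner_le_norm _ _
          have h2 : ‖x - c‖ ≤ r := by rwa [← dist_eq_norm]
          rw [hu, mul_one] at h1
          have := abs_le.mp h1
          nlinarith [this.1]
        have hsq : ‖x + -(lam • u) - a‖^2 ≤ ρ^2 := by
          have hrw : x + -(lam • u) - a = (x - a) - lam • u := by abel
          rw [hrw, norm_sub_sq_real, real_inner_smul_right, norm_smul, hu, Real.norm_eq_abs,
            abs_of_nonneg hlam0, mul_one]
          have hna : ‖x - a‖ ≤ ρ := by rwa [← dist_eq_norm]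
          have hna0 : 0 ≤ ‖x - a‖ := norm_nonneg _
          have h1 : lam * r ≤ lam * ⟪x - a, u⟫ := mul_le_mul_of_nonneg_left hinner hlam0
          have h2 : ‖x - a‖^2 ≤ ρ^2 := by nlinarith
          nlinarith
        rw [dist_eq_norm]
        have h3 := Real.sqrt_le_sqrt hsq
        rwa [Real.sqrt_sq (norm_nonneg _), Real.sqrt_sq hρ] at h3
      · -- lands in D
        show dist (x + -(lam • u)) e ≤ s
        have hshift : c + -(lam • u) = a + (min (2*r) m) • u := by
          rw [hc_def, ← h2rlam, sub_smul]; abel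
        calc dist (x + -(lam • u)) e
            ≤ dist (x + -(lam • u)) (c + -(lam • u)) + dist (c + -(lam • u)) e :=
              dist_triangle _ _ _
          _ ≤ r + (s - r) := by
              refine add_le_add ?_ ?_
              · rw [dist_add_right]; exact hxc
              · rw [hshift]; exact hkey
          _ = s := by ring
    calc volume (closedBall a ρ ∩ closedBall c r)
        ≤ volume ((fun x => x + (-(lam • u))) ⁻¹' (closedBall a ρ ∩ closedBall e s)) :=
          measure_mono hsub
      _ = volume (closedBall a ρ ∩ closedBall e s) :=
          measure_preimage_add_right volume _ _
end

section
/- The intersection graph of a finite family of closed disks in the plane that is bipartite is a planar graph. -/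
/-- `G` has a planar (crossing-free) straight-line drawing in the plane: vertices are placed
at distinct points, two edges meet only in shared endpoints, and no vertex lies on the open
part of an edge. By Fáry's theorem this is equivalent to planarity. -/
def HasPlanarStraightLineDrawing {V : Type*} (G : SimpleGraph V) : Prop :=
  ∃ f : V → EuclideanSpace ℝ (Fin 2),
    Function.Injective f ∧
    (∀ a b c d : V, G.Adj a b → G.Adj c d →
      ¬(a = c ∧ b = d) → ¬(a = d ∧ b = c) →
      segment ℝ (f a) (f b) ∩ segment ℝ (f c) (f d) ⊆
        f '' ({a, b} ∩ {c, d} : Set V)) ∧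
    (∀ v a b : V, G.Adj a b → f v ∈ segment ℝ (f a) (f b) → v = a ∨ v = b)

open Metric

/-- 2D cross product of `q - p` and `r - p`. -/
def det3 (p q r : EuclideanSpace ℝ (Fin 2)) : ℝ :=
  (q 0 - p 0) * (r 1 - p 1) - (q 1 - p 1) * (r 0 - p 0)

lemma seg_param {E : Type*} [AddCommGroup E] [Module ℝ E] {x y p : E}
    (h : p ∈ segment ℝ x y) : ∃ t : ℝ, 0 ≤ t ∧ t ≤ 1 ∧ p - x = t • (y - x) := by
  obtain ⟨a, b, ha, hb, hab, hz⟩ := h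
  refine ⟨b, hb, by linarith, ?_⟩
  have ha' : a = 1 - b := by linarith
  rw [← hz, ha']
  module

lemma shared_endpoint {x y z : EuclideanSpace ℝ (Fin 2)} (hd : det3 x y z ≠ 0)
    {p : EuclideanSpace ℝ (Fin 2)}
    (h1 : p ∈ segment ℝ x y) (h2 : p ∈ segment ℝ x z) : p = x := by
  obtain ⟨s, hs0, hs1, hs⟩ := seg_param h1
  obtain ⟨t, ht0, ht1, ht⟩ := seg_param h2
  have e : s • (y - x) = t • (z - x) := by rw [← hs, ← ht]
  have e0 : s * (y 0 - x 0) = t * (z 0 - x 0) := by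
    have := congrArg (fun v : EuclideanSpace ℝ (Fin 2) => v 0) e
    simpa [PiLp.smul_apply, PiLp.sub_apply, smul_eq_mul] using this
  have e1 : s * (y 1 - x 1) = t * (z 1 - x 1) := by
    have := congrArg (fun v : EuclideanSpace ℝ (Fin 2) => v 1) e
    simpa [PiLp.smul_apply, PiLp.sub_apply, smul_eq_mul] using this
  have hz : s * det3 x y z = 0 := by
    unfold det3
    linear_combination (z 1 - x 1) * e0 - (z 0 - x 0) * e1
  have hs' : s = 0 := by
    rcases mul_eq_zero.1 hz with h | h
    · exact h
    · exact absurd h hd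
  have : p - x = 0 := by rw [hs, hs', zero_smul]
  have := sub_eq_zero.1 this
  exact this

lemma quad_finite (a b c : ℝ) (ha : a ≠ 0) :
    {x : ℝ | a * x ^ 2 + b * x + c = 0}.Finite := by
  have hp : (Polynomial.C a * Polynomial.X ^ 2 + Polynomial.C b * Polynomial.X
      + Polynomial.C c : Polynomial ℝ) ≠ 0 := by
    intro h
    have h2 := congrArg (fun p : Polynomial ℝ => p.coeff 2) h
    simp [Polynomial.coeff_add, Polynomial.coeff_C_mul, Polynomial.coeff_X_pow,
      Polynomial.coeff_X, Polynomial.coeff_C] at h2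
    exact ha h2
  refine Set.Finite.subset (Polynomial.finite_setOf_isRoot hp) ?_
  intro x hx
  simp only [Set.mem_setOf_eq, Polynomial.IsRoot, Polynomial.eval_add,
    Polynomial.eval_mul, Polynomial.eval_pow, Polynomial.eval_C, Polynomial.eval_X]
  simpa using hx

lemma ball_inter_nonempty {E : Type*} [NormedAddCommGroup E] [NormedSpace ℝ E]
    (x y : E) (p q : ℝ) (hp : 0 ≤ p) (hq : 0 ≤ q) (h : dist x y ≤ p + q) :
    (closedBall x p ∩ closedBall y q).Nonempty := by
  rcases eq_or_lt_of_le (add_nonneg hp hq) with h0 | h0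
  · have hxy : x = y := by
      have : dist x y ≤ 0 := by linarith
      exact dist_le_zero.1 this
    exact ⟨x, by simpa using hp, by simp [hxy.symm ▸ (mem_closedBall_self hq : y ∈ closedBall y q), hxy, hq]⟩
  · refine ⟨x + (p / (p + q)) • (y - x), ?_, ?_⟩
    · have : dist (x + (p / (p + q)) • (y - x)) x = (p / (p + q)) * dist x y := by
        rw [dist_eq_norm]
        have : x + (p / (p + q)) • (y - x) - x = (p / (p + q)) • (y - x) := by abel
        rw [this, norm_smul, Real.norm_eq_abs, abs_of_nonneg (by positivity),
          ← dist_eq_norm, dist_comm y x]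
      rw [mem_closedBall, this]
      calc (p / (p + q)) * dist x y ≤ (p / (p + q)) * (p + q) := by
            apply mul_le_mul_of_nonneg_left h (by positivity)
        _ = p := by field_simp
    · have hd : x + (p / (p + q)) • (y - x) - y = (q / (p + q)) • (x - y) := by
        have hpq : p / (p + q) + q / (p + q) = 1 := by field_simp
        match_scalars <;> field_simp <;> ring
      have : dist (x + (p / (p + q)) • (y - x)) y = (q / (p + q)) * dist x y := by
        rw [dist_eq_norm, hd, norm_smul, Real.norm_eq_abs, abs_of_nonneg (by positivity),
          ← dist_eq_norm]
      rw [mem_closedBall, this]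
      calc (q / (p + q)) * dist x y ≤ (q / (p + q)) * (p + q) := by
            apply mul_le_mul_of_nonneg_left h (by positivity)
        _ = q := by field_simp

/-- The intersection graph of a finite family of closed disks in the plane that is bipartite
is a planar graph. -/
theorem stmt_10 (n : ℕ) (c : Fin n → EuclideanSpace ℝ (Fin 2)) (r : Fin n → ℝ)
    (G : SimpleGraph (Fin n))
    (hadj : ∀ i j, G.Adj i j ↔
      i ≠ j ∧ (closedBall (c i) (r i) ∩ closedBall (c j) (r j)).Nonempty)
    (hbip : G.Colorable 2) :
    HasPlanarStraightLineDrawing G := by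
  classical
  -- basic metric facts
  have hr0 : ∀ i j, G.Adj i j → 0 ≤ r i := by
    intro i j h
    obtain ⟨x, hx, -⟩ := ((hadj i j).1 h).2
    exact le_trans dist_nonneg (mem_closedBall.1 hx)
  have hdistle : ∀ i j, G.Adj i j → dist (c i) (c j) ≤ r i + r j := by
    intro i j h
    obtain ⟨x, hx1, hx2⟩ := ((hadj i j).1 h).2
    calc dist (c i) (c j) ≤ dist (c i) x + dist x (c j) := dist_triangle _ _ _
      _ ≤ r i + r j := add_le_add (by rw [dist_comm]; exact hx1) hx2
  have hgap : ∀ i j, i ≠ j → 0 ≤ r i → 0 ≤ r j → ¬ G.Adj i j →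
      r i + r j < dist (c i) (c j) := by
    intro i j hij hri hrj hA
    by_contra h
    push_neg at h
    exact hA ((hadj i j).2 ⟨hij, ball_inter_nonempty _ _ _ _ hri hrj h⟩)
  -- no triangles
  have notri : ∀ a b d : Fin n, G.Adj a b → G.Adj b d → G.Adj a d → False := by
    intro a b d h1 h2 h3
    obtain ⟨C⟩ := hbip
    have k1 := C.valid h1
    have k2 := C.valid h2
    have k3 := C.valid h3
    have : ∀ x y z : Fin 2, x ≠ y → y ≠ z → x ≠ z → False := by decide
    exact this _ _ _ k1 k2 k3
  -- the margin m
  set F : Finset (Fin n × Fin n) := Finset.univ.filter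
    (fun q => q.1 ≠ q.2 ∧ 0 ≤ r q.1 ∧ 0 ≤ r q.2 ∧ ¬ G.Adj q.1 q.2) with hF
  set gap : Fin n × Fin n → ℝ := fun q => dist (c q.1) (c q.2) - (r q.1 + r q.2) with hgapdef
  set m : ℝ := (insert (1 : ℝ) (F.image gap)).min' (Finset.insert_nonempty _ _) with hm
  have hm0 : 0 < m := by
    rw [hm]
    rw [Finset.lt_min'_iff]
    intro b hb
    rcases Finset.mem_insert.1 hb with h | h
    · simp [h]
    · obtain ⟨q, hq, rfl⟩ := Finset.mem_image.1 h
      obtain ⟨h1, h2, h3, h4⟩ := (Finset.mem_filter.1 hq).2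
      have := hgap q.1 q.2 h1 h2 h3 h4
      simp only [hgapdef]
      linarith
  have hmle : ∀ i j, i ≠ j → 0 ≤ r i → 0 ≤ r j → ¬ G.Adj i j →
      r i + r j + m ≤ dist (c i) (c j) := by
    intro i j h1 h2 h3 h4
    have hmem : (i, j) ∈ F := by
      rw [hF, Finset.mem_filter]
      exact ⟨Finset.mem_univ _, h1, h2, h3, h4⟩
    have : m ≤ gap (i, j) :=
      Finset.min'_le _ _ (Finset.mem_insert_of_mem (Finset.mem_image_of_mem _ hmem))
    simp only [hgapdef] at this
    linarith
  -- the moment curve perturbation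
  set g : Fin n → EuclideanSpace ℝ (Fin 2) :=
    fun i => (WithLp.equiv 2 (Fin 2 → ℝ)).symm ![(i : ℝ), (i : ℝ) ^ 2] with hgdef
  have hg0 : ∀ i, g i 0 = (i : ℝ) := fun i => rfl
  have hg1 : ∀ i, g i 1 = (i : ℝ) ^ 2 := fun i => rfl
  have hcast : ∀ i j : Fin n, i ≠ j → (i : ℝ) ≠ (j : ℝ) := by
    intro i j hij h
    exact hij (Fin.val_injective (Nat.cast_injective h))
  obtain ⟨Mg, hMg⟩ := Finite.exists_le (fun i : Fin n => ‖g i‖)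
  set M : ℝ := max Mg 0 with hMdef
  have hM0 : 0 ≤ M := le_max_right _ _
  have hMg' : ∀ i, ‖g i‖ ≤ M := fun i => le_trans (hMg i) (le_max_left _ _)
  set δ0 : ℝ := m / (8 * (M + 1)) with hδ0def
  have hδ00 : 0 < δ0 := by positivity
  have hδ0M : δ0 * M < m / 8 := by
    have h1 : δ0 * (M + 1) = m / 8 := by
      rw [hδ0def]; field_simp
    nlinarith
  -- bad sets
  set S : Fin n × Fin n × Fin n → Set ℝ := fun t =>
    {x | (((t.2.1 : ℝ) - (t.1 : ℝ)) * ((t.2.2 : ℝ) ^ 2 - (t.1 : ℝ) ^ 2)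
          - ((t.2.1 : ℝ) ^ 2 - (t.1 : ℝ) ^ 2) * ((t.2.2 : ℝ) - (t.1 : ℝ))) ≠ 0 ∧
      (((t.2.1 : ℝ) - (t.1 : ℝ)) * ((t.2.2 : ℝ) ^ 2 - (t.1 : ℝ) ^ 2)
          - ((t.2.1 : ℝ) ^ 2 - (t.1 : ℝ) ^ 2) * ((t.2.2 : ℝ) - (t.1 : ℝ))) * x ^ 2
        + ((c t.2.1 0 - c t.1 0) * ((t.2.2 : ℝ) ^ 2 - (t.1 : ℝ) ^ 2)
          + ((t.2.1 : ℝ) - (t.1 : ℝ)) * (c t.2.2 1 - c t.1 1)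
          - (c t.2.1 1 - c t.1 1) * ((t.2.2 : ℝ) - (t.1 : ℝ))
          - ((t.2.1 : ℝ) ^ 2 - (t.1 : ℝ) ^ 2) * (c t.2.2 0 - c t.1 0)) * x
        + ((c t.2.1 0 - c t.1 0) * (c t.2.2 1 - c t.1 1)
          - (c t.2.1 1 - c t.1 1) * (c t.2.2 0 - c t.1 0)) = 0} with hSdef
  set T : Fin n × Fin n → Set ℝ := fun q =>
    {x | ((q.2 : ℝ) - (q.1 : ℝ)) ≠ 0 ∧
      (c q.2 0 - c q.1 0) + x * ((q.2 : ℝ) - (q.1 : ℝ)) = 0} with hTdef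
  have hSfin : ∀ t, (S t).Finite := by
    intro t
    by_cases hA : (((t.2.1 : ℝ) - (t.1 : ℝ)) * ((t.2.2 : ℝ) ^ 2 - (t.1 : ℝ) ^ 2)
          - ((t.2.1 : ℝ) ^ 2 - (t.1 : ℝ) ^ 2) * ((t.2.2 : ℝ) - (t.1 : ℝ))) = 0
    · refine Set.Finite.subset (Set.finite_empty) ?_
      intro x hx
      exact absurd hA hx.1
    · refine Set.Finite.subset (quad_finite _
        ((c t.2.1 0 - c t.1 0) * ((t.2.2 : ℝ) ^ 2 - (t.1 : ℝ) ^ 2)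
          + ((t.2.1 : ℝ) - (t.1 : ℝ)) * (c t.2.2 1 - c t.1 1)
          - (c t.2.1 1 - c t.1 1) * ((t.2.2 : ℝ) - (t.1 : ℝ))
          - ((t.2.1 : ℝ) ^ 2 - (t.1 : ℝ) ^ 2) * (c t.2.2 0 - c t.1 0))
        ((c t.2.1 0 - c t.1 0) * (c t.2.2 1 - c t.1 1)
          - (c t.2.1 1 - c t.1 1) * (c t.2.2 0 - c t.1 0)) hA) ?_
      intro x hx
      exact hx.2
  have hTfin : ∀ q, (T q).Finite := by
    intro q
    apply Set.Subsingleton.finite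
    intro x hx y hy
    have h1 := hx.2
    have h2 := hy.2
    have : (x - y) * ((q.2 : ℝ) - (q.1 : ℝ)) = 0 := by linarith [h1, h2]
    rcases mul_eq_zero.1 this with h | h
    · linarith
    · exact absurd h hx.1
  have hBadFin : ((⋃ t, S t) ∪ ⋃ q, T q).Finite :=
    Set.Finite.union (Set.finite_iUnion hSfin) (Set.finite_iUnion hTfin)
  -- choose a good δ
  have hIooInf : (Set.Ioo (0 : ℝ) δ0).Infinite := Set.Ioo_infinite hδ00
  obtain ⟨δ, hδmem⟩ := (hIooInf.diff hBadFin).nonempty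
  obtain ⟨⟨hδ0, hδlt⟩, hδBad⟩ := hδmem
  set f : Fin n → EuclideanSpace ℝ (Fin 2) := fun i => c i + δ • g i with hfdef
  have hfco : ∀ (i : Fin n) (ℓ : Fin 2), f i ℓ = c i ℓ + δ * g i ℓ := by
    intro i ℓ
    simp [hfdef, PiLp.add_apply, PiLp.smul_apply, smul_eq_mul]
  -- injectivity
  have hInj : Function.Injective f := by
    intro i j hij
    by_contra hne
    have hne' : i ≠ j := fun h => hne h
    have h0 := congrArg (fun v : EuclideanSpace ℝ (Fin 2) => v 0) hij
    simp only [hfco, hg0] at h0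
    have : δ ∈ (⋃ t, S t) ∪ ⋃ q, T q := by
      refine Set.mem_union_right _ (Set.mem_iUnion.2 ⟨(i, j), ?_⟩)
      refine ⟨sub_ne_zero.2 (hcast j i hne'.symm), ?_⟩
      simp only
      linarith
    exact hδBad this
  -- no three collinear
  have hP2 : ∀ i j k : Fin n, i ≠ j → i ≠ k → j ≠ k → det3 (f i) (f j) (f k) ≠ 0 := by
    intro i j k hij hik hjk hd
    have hexp : det3 (f i) (f j) (f k) =
        (((j : ℝ) - (i : ℝ)) * ((k : ℝ) ^ 2 - (i : ℝ) ^ 2)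
          - ((j : ℝ) ^ 2 - (i : ℝ) ^ 2) * ((k : ℝ) - (i : ℝ))) * δ ^ 2
        + ((c j 0 - c i 0) * ((k : ℝ) ^ 2 - (i : ℝ) ^ 2)
          + ((j : ℝ) - (i : ℝ)) * (c k 1 - c i 1)
          - (c j 1 - c i 1) * ((k : ℝ) - (i : ℝ))
          - ((j : ℝ) ^ 2 - (i : ℝ) ^ 2) * (c k 0 - c i 0)) * δ
        + ((c j 0 - c i 0) * (c k 1 - c i 1) - (c j 1 - c i 1) * (c k 0 - c i 0)) := by
      simp only [det3, hfco, hg0, hg1]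
      ring
    have hA : (((j : ℝ) - (i : ℝ)) * ((k : ℝ) ^ 2 - (i : ℝ) ^ 2)
          - ((j : ℝ) ^ 2 - (i : ℝ) ^ 2) * ((k : ℝ) - (i : ℝ))) ≠ 0 := by
      have hfact : (((j : ℝ) - (i : ℝ)) * ((k : ℝ) ^ 2 - (i : ℝ) ^ 2)
          - ((j : ℝ) ^ 2 - (i : ℝ) ^ 2) * ((k : ℝ) - (i : ℝ)))
          = ((j : ℝ) - (i : ℝ)) * (((k : ℝ) - (i : ℝ)) * ((k : ℝ) - (j : ℝ))) := by ring
      rw [hfact]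
      exact mul_ne_zero (sub_ne_zero.2 (hcast j i hij.symm))
        (mul_ne_zero (sub_ne_zero.2 (hcast k i hik.symm))
          (sub_ne_zero.2 (hcast k j hjk.symm)))
    have : δ ∈ (⋃ t, S t) ∪ ⋃ q, T q := by
      refine Set.mem_union_left _ (Set.mem_iUnion.2 ⟨(i, j, k), ?_⟩)
      refine ⟨hA, ?_⟩
      rw [← hexp]
      exact hd
    exact hδBad this
  -- distance perturbation bounds
  have hfc : ∀ i, dist (f i) (c i) < m / 8 := by
    intro i
    have h1 : dist (f i) (c i) = δ * ‖g i‖ := by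
      rw [hfdef]
      simp only [dist_eq_norm]
      have : c i + δ • g i - c i = δ • g i := by abel
      rw [this, norm_smul, Real.norm_eq_abs, abs_of_pos hδ0]
    rw [h1]
    calc δ * ‖g i‖ ≤ δ0 * M :=
        mul_le_mul hδlt.le (hMg' i) (norm_nonneg _) (le_of_lt hδ00)
      _ < m / 8 := hδ0M
  have hadjf : ∀ i j, G.Adj i j → dist (f i) (f j) ≤ r i + r j + m / 4 := by
    intro i j h
    have t4 := dist_triangle4 (f i) (c i) (c j) (f j)
    have h1 := hfc i
    have h2 := hfc j
    have h3 := hdistle i j h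
    have h4 : dist (c j) (f j) = dist (f j) (c j) := dist_comm _ _
    linarith
  have hnonf : ∀ i j, i ≠ j → 0 ≤ r i → 0 ≤ r j → ¬ G.Adj i j →
      r i + r j + m / 2 ≤ dist (f i) (f j) := by
    intro i j h1 h2 h3 h4
    have t4 := dist_triangle4 (c i) (f i) (f j) (c j)
    have ha := hfc i
    have hb := hfc j
    have hc := hmle i j h1 h2 h3 h4
    have hd : dist (c i) (f i) = dist (f i) (c i) := dist_comm _ _
    have he : dist (f j) (c j) = dist (f j) (c j) := rfl
    linarith
  refine ⟨f, hInj, ?_, ?_⟩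
  · -- edges intersect only at shared endpoints
    intro a b d e hab hde hne1 hne2 p ⟨hp1, hp2⟩
    have hab' : a ≠ b := hab.ne
    have hde' : d ≠ e := hde.ne
    by_cases had : a = d
    · -- shared endpoint f a
      subst had
      have hbe : b ≠ e := fun h => hne1 ⟨rfl, h⟩
      have hdet := hP2 a b e hab' hde' hbe
      have hpa := shared_endpoint hdet hp1 hp2
      exact ⟨a, ⟨by simp, by simp⟩, hpa.symm⟩
    · by_cases hae : a = e
      · subst hae
        have hbd : b ≠ d := fun h => hne2 ⟨rfl, h⟩
        have hdet := hP2 a b d hab' had hbd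
        have hp2' : p ∈ segment ℝ (f a) (f d) := by rwa [segment_symm]
        have hpa := shared_endpoint hdet hp1 hp2'
        exact ⟨a, ⟨by simp, by simp⟩, hpa.symm⟩
      · by_cases hbd : b = d
        · subst hbd
          have hdet := hP2 b a e (Ne.symm hab') hde' hae
          have hp1' : p ∈ segment ℝ (f b) (f a) := by rwa [segment_symm]
          have hpb := shared_endpoint hdet hp1' hp2
          exact ⟨b, ⟨by simp, by simp⟩, hpb.symm⟩
        · by_cases hbe : b = e
          · subst hbe
            have hdet := hP2 b a d (Ne.symm hab') (Ne.symm hde') had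
            have hp1' : p ∈ segment ℝ (f b) (f a) := by rwa [segment_symm]
            have hp2' : p ∈ segment ℝ (f b) (f d) := by rwa [segment_symm]
            have hpb := shared_endpoint hdet hp1' hp2'
            exact ⟨b, ⟨by simp, by simp⟩, hpb.symm⟩
          · -- all four distinct: impossible
            exfalso
            have hra := hr0 _ _ hab
            have hrb := hr0 _ _ hab.symm
            have hrd := hr0 _ _ hde
            have hre := hr0 _ _ hde.symm
            have k1 : dist (f a) p + dist p (f b) = dist (f a) (f b) :=
              dist_add_dist_of_mem_segment hp1
            have k2 : dist (f d) p + dist p (f e) = dist (f d) (f e) :=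
              dist_add_dist_of_mem_segment hp2
            have hb1 := hadjf a b hab
            have hb2 := hadjf d e hde
            have hor1 : G.Adj a d ∨ G.Adj b e := by
              by_contra h
              push_neg at h
              have n1 := hnonf a d had hra hrd h.1
              have n2 := hnonf b e hbe hrb hre h.2
              have t1 := dist_triangle (f a) p (f d)
              have t2 := dist_triangle (f b) p (f e)
              have c1 : dist p (f d) = dist (f d) p := dist_comm _ _
              have c2 : dist p (f b) = dist (f b) p := dist_comm _ _
              linarith
            have hor2 : G.Adj a e ∨ G.Adj b d := by
              by_contra h
              push_neg at h
              have n1 := hnonf a e hae hra hre h.1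
              have n2 := hnonf b d hbd hrb hrd h.2
              have t1 := dist_triangle (f a) p (f e)
              have t2 := dist_triangle (f b) p (f d)
              have c1 : dist p (f b) = dist (f b) p := dist_comm _ _
              have c2 : dist p (f d) = dist (f d) p := dist_comm _ _
              linarith
            rcases hor1 with h1 | h1 <;> rcases hor2 with h2 | h2
            · exact notri e a d h2.symm h1 hde.symm
            · exact notri a b d hab h2 h1
            · exact notri a e b h2 h1.symm hab
            · exact notri d b e h2.symm h1 hde
  · -- no vertex on an open edge
    intro v a b hab hseg
    by_cases hva : v = a
    · exact Or.inl hva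
    · by_cases hvb : v = b
      · exact Or.inr hvb
      · exfalso
        have hdet := hP2 a b v hab.ne (Ne.symm hva) (Ne.symm hvb)
        obtain ⟨t, ht0, ht1, ht⟩ := seg_param hseg
        have e0 : f v 0 - f a 0 = t * (f b 0 - f a 0) := by
          have := congrArg (fun w : EuclideanSpace ℝ (Fin 2) => w 0) ht
          simpa [PiLp.smul_apply, PiLp.sub_apply, smul_eq_mul] using this
        have e1 : f v 1 - f a 1 = t * (f b 1 - f a 1) := by
          have := congrArg (fun w : EuclideanSpace ℝ (Fin 2) => w 1) ht
          simpa [PiLp.smul_apply, PiLp.sub_apply, smul_eq_mul] using this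
        apply hdet
        unfold det3
        linear_combination (f b 0 - f a 0) * e1 - (f b 1 - f a 1) * e0
end

section
/- Let s₁, s₂, s₃, s₄ be four disjoint closed line segments in the plane crossing a vertical line L at four points in strictly decreasing y-order, and consider the intersection graph of a set of segments lying (after truncation) in the closed left halfplane of L. Then it is impossible that s₁ and s₃ are connected by a path in this intersection graph while s₂ and s₄ are connected by a path in a different connected component. -/
namespace NI

abbrev Pt := ℤ × ℤ

/-- A lattice step: stay, or move one unit horizontally or vertically. -/
def Step (u v : Pt) : Prop :=
  (u.1 = v.1 ∨ u.2 = v.2) ∧ u.1 - v.1 ≤ 1 ∧ v.1 - u.1 ≤ 1 ∧ u.2 - v.2 ≤ 1 ∧ v.2 - u.2 ≤ 1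

instance : DecidablePred (fun p : Pt × Pt => Step p.1 p.2) := fun _ => by
  unfold Step; infer_instance

/-- Crossing indicator: the step `u → v` is vertical, to the right of `q`, and crosses
the horizontal ray from `q` (spans heights `q.2, q.2+1`). -/
def crP (q u v : Pt) : Prop :=
  u.1 = v.1 ∧ q.1 < u.1 ∧ ((u.2 = q.2 ∧ v.2 = q.2 + 1) ∨ (v.2 = q.2 ∧ u.2 = q.2 + 1))

instance (q u v : Pt) : Decidable (crP q u v) := by unfold crP; infer_instance

noncomputable def cr (q u v : Pt) : ZMod 2 := if crP q u v then 1 else 0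

/-- Parity of number of crossings of the rightward ray from `q` with the walk `C`. -/
noncomputable def NH (C : ℕ → Pt) (n : ℕ) (q : Pt) : ZMod 2 :=
  ∑ i ∈ Finset.range n, cr q (C i) (C (i + 1))

/-- indicator of the ray {p | x < p.1, p.2 = y+1}. -/
noncomputable def ray (x y : ℤ) (p : Pt) : ZMod 2 := if x < p.1 ∧ p.2 = y + 1 then 1 else 0

lemma key_up (x y : ℤ) (u v : Pt) (hs : Step u v) (hu : u ≠ (x, y + 1)) (hv : v ≠ (x, y + 1)) :
    cr (x, y) u v + cr (x, y + 1) u v = ray x y v - ray x y u := by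
  obtain ⟨a, b⟩ := u
  obtain ⟨c, d⟩ := v
  have hu' : ¬(a = x ∧ b = y + 1) := by simpa [Prod.ext_iff] using hu
  have hv' : ¬(c = x ∧ d = y + 1) := by simpa [Prod.ext_iff] using hv
  obtain ⟨h0, h1, h2, h3, h4⟩ := hs
  dsimp only at h0 h1 h2 h3 h4
  simp only [cr, ray]
  split_ifs <;> simp only [crP] at * <;> first | decide | (exfalso; omega)

lemma key_right (x y : ℤ) (u v : Pt) (hs : Step u v) (hu : u ≠ (x + 1, y)) (hv : v ≠ (x + 1, y)) :
    cr (x, y) u v = cr (x + 1, y) u v := by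
  obtain ⟨a, b⟩ := u
  obtain ⟨c, d⟩ := v
  have hu' : ¬(a = x + 1 ∧ b = y) := by simpa [Prod.ext_iff] using hu
  have hv' : ¬(c = x + 1 ∧ d = y) := by simpa [Prod.ext_iff] using hv
  obtain ⟨h0, h1, h2, h3, h4⟩ := hs
  dsimp only at h0 h1 h2 h3 h4
  simp only [cr]
  split_ifs <;> simp only [crP] at * <;> first | rfl | (exfalso; omega)

lemma NH_up (C : ℕ → Pt) (n : ℕ) (hsteps : ∀ i < n, Step (C i) (C (i + 1)))
    (hclosed : C n = C 0) (x y : ℤ) (hq' : ∀ i ≤ n, C i ≠ (x, y + 1)) :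
    NH C n (x, y) = NH C n (x, y + 1) := by
  have hsum : NH C n (x, y) + NH C n (x, y + 1)
      = ∑ i ∈ Finset.range n, (ray x y (C (i + 1)) - ray x y (C i)) := by
    rw [NH, NH, ← Finset.sum_add_distrib]
    refine Finset.sum_congr rfl fun i hi => ?_
    have hi' := Finset.mem_range.mp hi
    exact key_up x y _ _ (hsteps i hi') (hq' i hi'.le) (hq' (i + 1) hi')
  rw [Finset.sum_range_sub (fun i => ray x y (C i)) n, hclosed, sub_self] at hsum
  have h2 : NH C n (x, y) + NH C n (x, y + 1) + NH C n (x, y + 1)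
      = NH C n (x, y + 1) := by rw [hsum, zero_add]
  rwa [add_assoc, CharTwo.add_self_eq_zero, add_zero] at h2

lemma NH_right (C : ℕ → Pt) (n : ℕ) (hsteps : ∀ i < n, Step (C i) (C (i + 1)))
    (x y : ℤ) (hq' : ∀ i ≤ n, C i ≠ (x + 1, y)) :
    NH C n (x, y) = NH C n (x + 1, y) := by
  refine Finset.sum_congr rfl fun i hi => ?_
  have hi' := Finset.mem_range.mp hi
  exact key_right x y _ _ (hsteps i hi') (hq' i hi'.le) (hq' (i + 1) hi')

lemma NH_move (C : ℕ → Pt) (n : ℕ) (hsteps : ∀ i < n, Step (C i) (C (i + 1)))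
    (hclosed : C n = C 0) (q q' : Pt) (hqq' : Step q q')
    (hq : ∀ i ≤ n, C i ≠ q) (hq' : ∀ i ≤ n, C i ≠ q') :
    NH C n q = NH C n q' := by
  obtain ⟨x, y⟩ := q
  obtain ⟨x', y'⟩ := q'
  obtain ⟨h0, h1, h2, h3, h4⟩ := hqq'
  rcases h0 with h0 | h0
  · -- vertical or stay
    subst h0
    have : y' = y ∨ y' = y + 1 ∨ y = y' + 1 := by omega
    rcases this with h | h | h
    · subst h; rfl
    · subst h; exact NH_up C n hsteps hclosed x y hq'
    · subst h; exact (NH_up C n hsteps hclosed x y' hq).symm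
  · subst h0
    have : x' = x ∨ x' = x + 1 ∨ x = x' + 1 := by omega
    rcases this with h | h | h
    · subst h; rfl
    · subst h; exact NH_right C n hsteps x y hq'
    · subst h; exact (NH_right C n hsteps x' y hq).symm

lemma NH_walk (C : ℕ → Pt) (n : ℕ) (hsteps : ∀ i < n, Step (C i) (C (i + 1)))
    (hclosed : C n = C 0) (Q : ℕ → Pt) (m : ℕ) (hQ : ∀ j < m, Step (Q j) (Q (j + 1)))
    (havoid : ∀ j ≤ m, ∀ i ≤ n, C i ≠ Q j) :
    NH C n (Q 0) = NH C n (Q m) := by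
  induction m with
  | zero => rfl
  | succ m ih =>
    rw [ih (fun j hj => hQ j (by omega)) (fun j hj => havoid j (by omega))]
    exact NH_move C n hsteps hclosed (Q m) (Q (m + 1)) (hQ m (by omega))
      (havoid m (by omega)) (havoid (m + 1) le_rfl)

lemma mkStep {a b c d : ℤ}
    (h : (a = c ∨ b = d) ∧ a - c ≤ 1 ∧ c - a ≤ 1 ∧ b - d ≤ 1 ∧ d - b ≤ 1) :
    Step (a, b) (c, d) := h

lemma cr_zero_left {q u v : Pt} (h : u.1 ≤ q.1) : cr q u v = 0 := by
  rw [cr, if_neg]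
  rintro ⟨-, h2, -⟩
  omega

lemma cr_zero_height {q u v : Pt} (h1 : ¬(u.2 = q.2 ∧ v.2 = q.2 + 1))
    (h2 : ¬(v.2 = q.2 ∧ u.2 = q.2 + 1)) : cr q u v = 0 := by
  rw [cr, if_neg]
  rintro ⟨-, -, h | h⟩
  exacts [h1 h, h2 h]

lemma cr_one {q u v : Pt} (h1 : u.1 = v.1) (h2 : q.1 < u.1) (h3 : u.2 = q.2)
    (h4 : v.2 = q.2 + 1) : cr q u v = 1 := by
  rw [cr, if_pos ⟨h1, h2, Or.inl ⟨h3, h4⟩⟩]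

/-- The discrete non-interleaving theorem. -/
theorem star (P Q : ℕ → Pt) (n m : ℕ) (A1 A2 A3 A4 : ℤ)
    (hP0 : P 0 = (0, A1)) (hPn : P n = (0, A3)) (hQ0 : Q 0 = (0, A2)) (hQm : Q m = (0, A4))
    (h12 : A2 < A1) (h23 : A3 < A2) (h34 : A4 < A3)
    (hPstep : ∀ i < n, Step (P i) (P (i + 1))) (hQstep : ∀ j < m, Step (Q j) (Q (j + 1)))
    (hPx : ∀ i ≤ n, (P i).1 ≤ 0) (hQx : ∀ j ≤ m, (Q j).1 ≤ 0)
    (hdisj : ∀ i ≤ n, ∀ j ≤ m, P i ≠ Q j) : False := by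
  set D : ℕ := (A1 - A3).toNat with hD
  have hDval : (D : ℤ) = A1 - A3 := Int.toNat_of_nonneg (by omega)
  set N : ℕ := n + D + 2 with hN
  set C : ℕ → Pt := fun i =>
    if i ≤ n then P i else if i ≤ n + 1 + D then (1, A3 + ((i : ℤ) - (n + 1 : ℤ))) else (0, A1)
    with hC
  have hCP : ∀ i ≤ n, C i = P i := fun i hi => by simp [hC, hi]
  have hCmid : ∀ j ≤ D, C (n + 1 + j) = (1, A3 + j) := fun j hj => by
    have h1 : ¬(n + 1 + j ≤ n) := by omega
    have h2 : n + 1 + j ≤ n + 1 + D := by omega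
    simp only [hC, h1, if_false, h2, if_true, Prod.mk.injEq, true_and]
    push_cast
    ring_nf
  have hCN : C N = (0, A1) := by
    have h1 : ¬(N ≤ n) := by omega
    have h2 : ¬(N ≤ n + 1 + D) := by omega
    simp [hC, h1, h2]
  have hC0 : C 0 = (0, A1) := by rw [hCP 0 (by omega), hP0]
  have hclosed : C N = C 0 := by rw [hCN, hC0]
  -- steps of C
  have hsteps : ∀ i < N, Step (C i) (C (i + 1)) := by
    intro i hi
    rcases lt_or_ge i n with h | h
    · rw [hCP i h.le, hCP (i + 1) h]
      exact hPstep i h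
    rcases eq_or_lt_of_le h with h' | h'
    · subst h'
      rw [hCP n le_rfl, hPn, (by omega : n + 1 = n + 1 + 0), hCmid 0 (by omega)]
      exact mkStep (by refine ⟨?_, ?_, ?_, ?_, ?_⟩ <;> omega)
    rcases lt_or_ge i (n + 1 + D) with h2 | h2
    · obtain ⟨j, rfl, hjD⟩ : ∃ j, i = n + 1 + j ∧ j < D := ⟨i - (n + 1), by omega⟩
      rw [hCmid j hjD.le, (by omega : n + 1 + j + 1 = n + 1 + (j + 1)), hCmid (j + 1) hjD]
      exact mkStep (by refine ⟨Or.inl rfl, ?_, ?_, ?_, ?_⟩ <;> first | (push_cast; omega) | push_cast | omega)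
    · have hi' : i = n + 1 + D := by omega
      subst hi'
      rw [hCmid D le_rfl, (by omega : n + 1 + D + 1 = N), hCN]
      exact mkStep (by refine ⟨?_, ?_, ?_, ?_, ?_⟩ <;> omega)
  -- avoidance: C never hits Q
  have havoid : ∀ j ≤ m, ∀ i ≤ N, C i ≠ Q j := by
    intro j hj i hi
    rcases le_or_gt i n with h | h
    · rw [hCP i h]; exact hdisj i h j hj
    rcases le_or_gt i (n + 1 + D) with h2 | h2
    · obtain ⟨k, rfl, hk⟩ : ∃ k, i = n + 1 + k ∧ k ≤ D := ⟨i - (n + 1), by omega⟩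
      rw [hCmid k hk]
      intro hcon
      have hx := hQx j hj
      rw [← hcon] at hx
      simp at hx
    · have hi' : i = N := by omega
      subst hi'
      rw [hCN, ← hP0]
      exact hdisj 0 (by omega) j hj
  -- generic vanishing of terms of the sum
  have hterm : ∀ (y : ℤ), ∀ i < N, (∀ k : ℕ, i = n + 1 + k → A3 + (k : ℤ) ≠ y) →
      cr ((0 : ℤ), y) (C i) (C (i + 1)) = 0 := by
    intro y i hiN hne
    rcases le_or_gt i n with h | h
    · rw [hCP i h]
      exact cr_zero_left (by simpa using hPx i h)
    rcases le_or_gt (i + 1) (n + 1 + D) with h2 | h2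
    · obtain ⟨k, rfl, hk⟩ : ∃ k, i = n + 1 + k ∧ k + 1 ≤ D := ⟨i - (n + 1), by omega⟩
      rw [hCmid k (by omega), (by omega : n + 1 + k + 1 = n + 1 + (k + 1)), hCmid (k + 1) (by omega)]
      have hky := hne k rfl
      refine cr_zero_height ?_ ?_ <;> · dsimp only; push_cast; omega
    · have hi' : i = n + 1 + D := by omega
      subst hi'
      have hky := hne D rfl
      rw [hCmid D le_rfl, (by omega : n + 1 + D + 1 = N), hCN]
      refine cr_zero_height ?_ ?_ <;> · dsimp only; omega
  -- value at (0, A2) : exactly one crossing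
  have hval2 : NH C N ((0 : ℤ), A2) = 1 := by
    rw [NH, Finset.sum_eq_single (n + 1 + (A2 - A3).toNat)]
    · have hk : (A2 - A3).toNat < D := by omega
      rw [hCmid _ hk.le, (by omega : n + 1 + (A2 - A3).toNat + 1 = n + 1 + ((A2 - A3).toNat + 1)),
        hCmid _ hk]
      refine cr_one rfl (by norm_num) ?_ ?_ <;> · dsimp only; push_cast; omega
    · intro i hi hne
      refine hterm A2 i (Finset.mem_range.mp hi) fun k hk hcon => ?_
      omega
    · intro hcon
      exact absurd (Finset.mem_range.mpr (by omega)) hcon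
  -- value at (0, A4) : no crossing
  have hval4 : NH C N ((0 : ℤ), A4) = 0 := by
    rw [NH]
    refine Finset.sum_eq_zero fun i hi => ?_
    refine hterm A4 i (Finset.mem_range.mp hi) fun k hk hcon => ?_
    omega
  have hfin := NH_walk C N hsteps hclosed Q m hQstep havoid
  rw [hQ0, hQm, hval2, hval4] at hfin
  exact one_ne_zero hfin

/-- An `η`-chain inside `S` from `x` to `y`. -/
def Chain (S : Set (ℝ × ℝ)) (η : ℝ) (x y : ℝ × ℝ) : Prop :=
  ∃ (n : ℕ) (c : ℕ → ℝ × ℝ), c 0 = x ∧ c n = y ∧ (∀ i < n, dist (c i) (c (i + 1)) ≤ η) ∧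
    ∀ i ≤ n, c i ∈ S

lemma chain_refl {S : Set (ℝ × ℝ)} {η : ℝ} {x : ℝ × ℝ} (hx : x ∈ S) : Chain S η x x :=
  ⟨0, fun _ => x, rfl, rfl, fun i hi => absurd hi (by omega), fun _ _ => hx⟩

lemma chain_trans {S : Set (ℝ × ℝ)} {η : ℝ} {x y z : ℝ × ℝ}
    (h1 : Chain S η x y) (h2 : Chain S η y z) : Chain S η x z := by
  obtain ⟨n, c, hc0, hcn, hcs, hcm⟩ := h1
  obtain ⟨n', c', hc0', hcn', hcs', hcm'⟩ := h2
  refine ⟨n + n', fun i => if i < n then c i else c' (i - n), ?_, ?_, ?_, ?_⟩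
  · dsimp only
    rcases Nat.eq_zero_or_pos n with h | h
    · subst h
      rw [if_neg (by omega)]
      exact hc0'.trans (hcn.symm.trans hc0)
    · rw [if_pos h]; exact hc0
  · dsimp only
    rw [if_neg (by omega)]
    rw [Nat.add_sub_cancel_left]
    exact hcn'
  · intro i hi
    dsimp only
    rcases lt_or_ge (i + 1) n with h | h
    · rw [if_pos (by omega), if_pos h]
      exact hcs i (by omega)
    rcases lt_or_ge i n with h' | h'
    · have he : i + 1 - n = 0 := by omega
      rw [if_pos h', if_neg (by omega), he, hc0', ← hcn, (by omega : n = i + 1)]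
      exact hcs i (by omega)
    · rw [if_neg (by omega), if_neg (by omega), (by omega : i + 1 - n = i - n + 1)]
      exact hcs' (i - n) (by omega)
  · intro i hi
    dsimp only
    rcases lt_or_ge i n with h | h
    · rw [if_pos h]; exact hcm i h.le
    · rw [if_neg (by omega)]; exact hcm' (i - n) (by omega)

lemma chain_seg {S : Set (ℝ × ℝ)} {η : ℝ} (hη : 0 < η) {x y : ℝ × ℝ}
    (hxy : segment ℝ x y ⊆ S) : Chain S η x y := by
  obtain ⟨n₀, hn₀⟩ := exists_nat_ge (‖y - x‖ / η)
  set n : ℕ := n₀ + 1 with hn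
  have hn0 : 0 < n := by omega
  have hnR : (0 : ℝ) < (n : ℝ) := by exact_mod_cast hn0
  have hnle : ‖y - x‖ ≤ n * η := by
    rw [div_le_iff₀ hη] at hn₀
    have h : (n₀ : ℝ) ≤ n := by exact_mod_cast Nat.le_succ n₀
    nlinarith [norm_nonneg (y - x)]
  refine ⟨n, fun i => x + (((min i n : ℕ) : ℝ) / n) • (y - x), ?_, ?_, ?_, ?_⟩
  · simp
  · dsimp only
    rw [min_self, div_self hnR.ne', one_smul]
    abel
  · intro i hi
    dsimp only
    rw [min_eq_left hi.le, min_eq_left hi, dist_eq_norm]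
    have key : (x + ((i : ℝ) / n) • (y - x)) - (x + (((i + 1 : ℕ) : ℝ) / n) • (y - x))
        = (((i : ℝ) / n) - (((i + 1 : ℕ) : ℝ) / n)) • (y - x) := by
      rw [sub_smul]; abel
    rw [key, norm_smul]
    have harg : |((i : ℝ) / n) - (((i + 1 : ℕ) : ℝ) / n)| = 1 / n := by
      rw [div_sub_div_same, show (i : ℝ) - ((i + 1 : ℕ) : ℝ) = -1 by push_cast; ring,
        abs_div, abs_neg, abs_one, abs_of_nonneg hnR.le]
    rw [Real.norm_eq_abs, harg, div_mul_eq_mul_div, one_mul, div_le_iff₀ hnR]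
    calc ‖y - x‖ ≤ n * η := hnle
    _ = η * n := by ring
  · intro i hi
    apply hxy
    rw [segment_eq_image' ℝ x y]
    exact ⟨((min i n : ℕ) : ℝ) / n, ⟨by positivity, by
      rw [div_le_one hnR]
      exact_mod_cast min_le_right i n⟩, rfl⟩

variable (x₀ η : ℝ)

/-- Snap a point of the plane to the integer grid (with the line `x = x₀` going to column 0,
points to its left going to nonpositive columns). -/
noncomputable def Zmap (p : ℝ × ℝ) : Pt := (⌈(p.1 - x₀) / η⌉, ⌊p.2 / η⌋)

/-- The real point corresponding to a grid point. -/
noncomputable def anchor (w : Pt) : ℝ × ℝ := (x₀ + w.1 * η, w.2 * η)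

lemma ceil_dist (hη : 0 < η) (t : ℝ) : |(⌈t / η⌉ : ℝ) * η - t| ≤ η := by
  have e1 : t ≤ (⌈t / η⌉ : ℝ) * η := (div_le_iff₀ hη).mp (Int.le_ceil _)
  have e2 : ((⌈t / η⌉ : ℝ) - 1) * η < t := by
    rw [← lt_div_iff₀ hη]
    have := Int.ceil_lt_add_one (t / η)
    linarith
  rw [abs_le]
  constructor <;> nlinarith

lemma floor_dist (hη : 0 < η) (t : ℝ) : |(⌊t / η⌋ : ℝ) * η - t| ≤ η := by
  have e1 : (⌊t / η⌋ : ℝ) * η ≤ t := by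
    rw [← le_div_iff₀ hη]
    exact Int.floor_le _
  have e2 : t < ((⌊t / η⌋ : ℝ) + 1) * η := by
    rw [← div_lt_iff₀ hη]
    have := Int.sub_one_lt_floor (t / η)
    linarith
  rw [abs_le]
  constructor <;> nlinarith

lemma anchor_Zmap (hη : 0 < η) (p : ℝ × ℝ) : dist (anchor x₀ η (Zmap x₀ η p)) p ≤ η := by
  rw [Prod.dist_eq, sup_le_iff]
  constructor
  · rw [Real.dist_eq]
    have := ceil_dist η hη (p.1 - x₀)
    calc |(anchor x₀ η (Zmap x₀ η p)).1 - p.1|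
        = |(⌈(p.1 - x₀) / η⌉ : ℝ) * η - (p.1 - x₀)| := by
          rw [anchor, Zmap]; dsimp only; ring_nf
    _ ≤ η := this
  · rw [Real.dist_eq]
    exact floor_dist η hη p.2

lemma ceil_close (hη : 0 < η) {s t : ℝ} (h : |s - t| ≤ η) :
    ⌈s / η⌉ - ⌈t / η⌉ ≤ 1 ∧ ⌈t / η⌉ - ⌈s / η⌉ ≤ 1 := by
  rw [abs_le] at h
  have k : ∀ u v : ℝ, u - v ≤ η → ⌈u / η⌉ - ⌈v / η⌉ ≤ 1 := by
    intro u v huv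
    have h1 : u / η ≤ v / η + 1 := by
      rw [div_add' _ _ _ hη.ne', div_le_div_iff_of_pos_right hη]
      linarith
    have := Int.ceil_le_ceil h1
    rw [show v / η + 1 = v / η + ((1 : ℤ) : ℝ) by norm_num, Int.ceil_add_intCast] at this
    omega
  exact ⟨k s t (by linarith), k t s (by linarith)⟩

lemma floor_close (hη : 0 < η) {s t : ℝ} (h : |s - t| ≤ η) :
    ⌊s / η⌋ - ⌊t / η⌋ ≤ 1 ∧ ⌊t / η⌋ - ⌊s / η⌋ ≤ 1 := by
  rw [abs_le] at h
  have k : ∀ u v : ℝ, u - v ≤ η → ⌊u / η⌋ - ⌊v / η⌋ ≤ 1 := by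
    intro u v huv
    have h1 : u / η ≤ v / η + 1 := by
      rw [div_add' _ _ _ hη.ne', div_le_div_iff_of_pos_right hη]
      linarith
    have := Int.floor_le_floor h1
    rw [show v / η + 1 = v / η + ((1 : ℤ) : ℝ) by norm_num, Int.floor_add_intCast] at this
    omega
  exact ⟨k s t (by linarith), k t s (by linarith)⟩

/-- The grid walk obtained from a real chain: even indices are snapped chain points, odd
indices are intermediate corners. -/
noncomputable def zc (c : ℕ → ℝ × ℝ) (j : ℕ) : Pt :=
  if Even j then Zmap x₀ η (c (j / 2))
  else ((Zmap x₀ η (c (j / 2 + 1))).1, (Zmap x₀ η (c (j / 2))).2)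

lemma zc_even (c : ℕ → ℝ × ℝ) (i : ℕ) : zc x₀ η c (2 * i) = Zmap x₀ η (c i) := by
  rw [zc, if_pos ⟨i, by omega⟩, (by omega : 2 * i / 2 = i)]

lemma zc_odd (c : ℕ → ℝ × ℝ) (i : ℕ) :
    zc x₀ η c (2 * i + 1) = ((Zmap x₀ η (c (i + 1))).1, (Zmap x₀ η (c i)).2) := by
  have hodd : ¬ Even (2 * i + 1) := by
    rw [Nat.even_iff]; omega
  rw [zc, if_neg hodd, (by omega : (2 * i + 1) / 2 = i)]

lemma zc_step (hη : 0 < η) (c : ℕ → ℝ × ℝ) (nc : ℕ)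
    (hc : ∀ i < nc, dist (c i) (c (i + 1)) ≤ η) :
    ∀ j < 2 * nc, Step (zc x₀ η c j) (zc x₀ η c (j + 1)) := by
  intro j hj
  have hd : ∀ i < nc, |(c i).1 - (c (i + 1)).1| ≤ η ∧ |(c i).2 - (c (i + 1)).2| ≤ η := by
    intro i hi
    have := hc i hi
    rw [Prod.dist_eq, sup_le_iff, Real.dist_eq, Real.dist_eq] at this
    exact this
  rcases Nat.even_or_odd j with ⟨i, rfl⟩ | ⟨i, rfl⟩
  · have hi : i < nc := by omega
    rw [(by omega : i + i = 2 * i), zc_even, zc_odd]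
    have h1 := ceil_close η hη (show |((c i).1 - x₀) - ((c (i + 1)).1 - x₀)| ≤ η by
      rw [show ((c i).1 - x₀) - ((c (i + 1)).1 - x₀) = (c i).1 - (c (i + 1)).1 by ring]
      exact (hd i hi).1)
    simp only [Zmap]
    exact ⟨Or.inr rfl, by omega, by omega, by omega, by omega⟩
  · have hi : i < nc := by omega
    rw [zc_odd, (by omega : 2 * i + 1 + 1 = 2 * (i + 1)), zc_even]
    have h2 := floor_close η hη (hd i hi).2
    simp only [Zmap]
    exact ⟨Or.inl rfl, by omega, by omega, by omega, by omega⟩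

lemma zc_mem (hη : 0 < η) (c : ℕ → ℝ × ℝ) (nc : ℕ)
    (hc : ∀ i < nc, dist (c i) (c (i + 1)) ≤ η) :
    ∀ j ≤ 2 * nc, ∃ i ≤ nc, dist (anchor x₀ η (zc x₀ η c j)) (c i) ≤ 2 * η := by
  intro j hj
  rcases Nat.even_or_odd j with ⟨i, rfl⟩ | ⟨i, rfl⟩
  · refine ⟨i, by omega, ?_⟩
    rw [(by omega : i + i = 2 * i), zc_even]
    calc dist (anchor x₀ η (Zmap x₀ η (c i))) (c i) ≤ η := anchor_Zmap x₀ η hη (c i)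
    _ ≤ 2 * η := by linarith
  · have hi : i < nc := by omega
    refine ⟨i + 1, by omega, ?_⟩
    rw [zc_odd]
    have hstep := hc i hi
    rw [Prod.dist_eq, sup_le_iff, Real.dist_eq, Real.dist_eq] at hstep
    rw [Prod.dist_eq, sup_le_iff]
    constructor
    · rw [anchor]; dsimp only [Zmap]
      rw [Real.dist_eq]
      have := ceil_dist η hη ((c (i + 1)).1 - x₀)
      rw [show x₀ + (⌈((c (i + 1)).1 - x₀) / η⌉ : ℝ) * η - (c (i + 1)).1
        = (⌈((c (i + 1)).1 - x₀) / η⌉ : ℝ) * η - ((c (i + 1)).1 - x₀) by ring]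
      linarith
    · rw [anchor]; dsimp only [Zmap]
      rw [Real.dist_eq]
      have h1 := floor_dist η hη ((c i).2)
      have h2 := hstep.2
      calc |(⌊(c i).2 / η⌋ : ℝ) * η - (c (i + 1)).2|
          ≤ |(⌊(c i).2 / η⌋ : ℝ) * η - (c i).2| + |(c i).2 - (c (i + 1)).2| := by
            have := abs_sub_le ((⌊(c i).2 / η⌋ : ℝ) * η) ((c i).2) ((c (i + 1)).2)
            exact this
      _ ≤ η + η := add_le_add h1 h2
      _ = 2 * η := by ring

lemma zc_left (hη : 0 < η) (c : ℕ → ℝ × ℝ) (nc : ℕ) (hcx : ∀ i ≤ nc, (c i).1 ≤ x₀) :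
    ∀ j ≤ 2 * nc, (zc x₀ η c j).1 ≤ 0 := by
  intro j hj
  have key : ∀ i ≤ nc, (Zmap x₀ η (c i)).1 ≤ 0 := by
    intro i hi
    rw [Zmap]
    dsimp only
    rw [Int.ceil_le]
    push_cast
    apply div_nonpos_of_nonpos_of_nonneg (by linarith [hcx i hi]) hη.le
  rcases Nat.even_or_odd j with ⟨i, rfl⟩ | ⟨i, rfl⟩
  · rw [(by omega : i + i = 2 * i), zc_even]
    exact key i (by omega)
  · rw [zc_odd]
    exact key (i + 1) (by omega)

lemma exists_sep {A B : Set (ℝ × ℝ)} (hA : IsCompact A) (hB : IsCompact B)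
    (hAne : A.Nonempty) (hBne : B.Nonempty) (hAB : A ∩ B = ∅) :
    ∃ ε > 0, ∀ a ∈ A, ∀ b ∈ B, ε ≤ dist a b := by
  obtain ⟨a₀, ha₀, hmin⟩ := hA.exists_isMinOn hAne
    ((Metric.continuous_infDist_pt B).continuousOn)
  obtain ⟨b₀, hb₀, heq⟩ := hB.exists_infDist_eq_dist hBne a₀
  refine ⟨Metric.infDist a₀ B, ?_, ?_⟩
  · rw [heq, gt_iff_lt, dist_pos]
    intro hcon
    subst hcon
    have hmem : a₀ ∈ A ∩ B := ⟨ha₀, hb₀⟩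
    rw [hAB] at hmem
    exact hmem
  · intro a ha b hb
    calc Metric.infDist a₀ B ≤ Metric.infDist a B := hmin ha
    _ ≤ dist a b := Metric.infDist_le_dist_of_mem hb

lemma isCompact_seg (x y : ℝ × ℝ) : IsCompact (segment ℝ x y) := by
  rw [segment_eq_image' ℝ x y]
  exact isCompact_Icc.image (by continuity)

/-- From a walk in the intersection graph, extract a polygonal chain of anchor points. -/
lemma anchors {ι : Type*} (f : ι → (ℝ × ℝ) × (ℝ × ℝ)) (G : SimpleGraph ι)
    (hadj : ∀ i j, G.Adj i j ↔ i ≠ j ∧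
      (segment ℝ (f i).1 (f i).2 ∩ segment ℝ (f j).1 (f j).2).Nonempty)
    : ∀ {j j' : ι} (w : G.Walk j j') (q q' : ℝ × ℝ),
    q ∈ segment ℝ (f j).1 (f j).2 → q' ∈ segment ℝ (f j').1 (f j').2 →
    ∃ (k : ℕ) (r : ℕ → ℝ × ℝ) (idx : ℕ → ι), 0 < k ∧ r 0 = q ∧ r k = q' ∧
      ∀ i < k, r i ∈ segment ℝ (f (idx i)).1 (f (idx i)).2 ∧
        r (i + 1) ∈ segment ℝ (f (idx i)).1 (f (idx i)).2 ∧ G.Reachable j (idx i) := by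
  intro j j' w
  induction w with
  | @nil u =>
    intro q q' hq hq'
    refine ⟨1, fun i => if i = 0 then q else q', fun _ => u, one_pos, rfl, rfl, ?_⟩
    intro i hi
    have : i = 0 := by omega
    subst this
    exact ⟨by simpa using hq, by simpa using hq', SimpleGraph.Reachable.refl u⟩
  | @cons u v w' hadj' p ih =>
    intro q q' hq hq'
    obtain ⟨hne, t, ht⟩ := (hadj u v).mp hadj'
    obtain ⟨k, r, idx, hk, hr0, hrk, hprop⟩ := ih t q' ht.2 hq'
    refine ⟨k + 1, fun i => if i = 0 then q else r (i - 1), fun i => if i = 0 then u else idx (i - 1),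
      by omega, rfl, by simp [hrk], ?_⟩
    intro i hi
    rcases Nat.eq_zero_or_pos i with h0 | h0
    · subst h0
      simp only [if_pos rfl, if_neg (by omega : ¬(0 + 1 = 0))]
      exact ⟨hq, by simpa [hr0] using ht.1, SimpleGraph.Reachable.refl u⟩
    · have h1 : ¬(i = 0) := by omega
      have h2 : ¬(i + 1 = 0) := by omega
      simp only [if_neg h1, if_neg h2]
      obtain ⟨m1, m2, m3⟩ := hprop (i - 1) (by omega)
      rw [(by omega : i + 1 - 1 = i - 1 + 1)]
      exact ⟨m1, m2, (hadj'.reachable).trans m3⟩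

lemma floor_sep {η a b : ℝ} (hη : 0 < η) (h : b + η < a) : ⌊b / η⌋ < ⌊a / η⌋ := by
  have hfl : (⌊b / η⌋ : ℝ) ≤ b / η := Int.floor_le _
  have h2 : 1 ≤ (a - b) / η := (one_le_div hη).mpr (by linarith)
  rw [sub_div] at h2
  have h1 : ((⌊b / η⌋ + 1 : ℤ) : ℝ) ≤ a / η := by push_cast; linarith
  have := Int.le_floor.mpr h1
  omega

end NI

/-- Non-interleaving of components of the truncated arrangement. Let a family of closed line
segments (indexed by `ι`, with endpoints `(f i).1, (f i).2`) lie in the closed left halfplane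
`{p | p.1 ≤ x₀}` of a vertical line `L = {p | p.1 = x₀}`, with intersection graph `G`.
If four pairwise disjoint segments `s₁, s₂, s₃, s₄` of the family cross `L` at points
`p₁, p₂, p₃, p₄` in strictly decreasing `y`-order, then it is impossible that `s₁` and `s₃`
are connected in `G` while `s₂` and `s₄` are connected in a different component of `G`. -/
theorem stmt_14 {ι : Type*} (f : ι → (ℝ × ℝ) × (ℝ × ℝ)) (x₀ : ℝ)
    (hleft : ∀ i, segment ℝ (f i).1 (f i).2 ⊆ {p : ℝ × ℝ | p.1 ≤ x₀})
    (G : SimpleGraph ι)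
    (hadj : ∀ i j, G.Adj i j ↔ i ≠ j ∧
      (segment ℝ (f i).1 (f i).2 ∩ segment ℝ (f j).1 (f j).2).Nonempty)
    (i₁ i₂ i₃ i₄ : ι) (p₁ p₂ p₃ p₄ : ℝ × ℝ)
    (hdisj : ∀ j ∈ ({i₁, i₂, i₃, i₄} : Set ι), ∀ k ∈ ({i₁, i₂, i₃, i₄} : Set ι), j ≠ k →
      segment ℝ (f j).1 (f j).2 ∩ segment ℝ (f k).1 (f k).2 = ∅)
    (hp₁ : p₁ ∈ segment ℝ (f i₁).1 (f i₁).2) (hL₁ : p₁.1 = x₀)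
    (hp₂ : p₂ ∈ segment ℝ (f i₂).1 (f i₂).2) (hL₂ : p₂.1 = x₀)
    (hp₃ : p₃ ∈ segment ℝ (f i₃).1 (f i₃).2) (hL₃ : p₃.1 = x₀)
    (hp₄ : p₄ ∈ segment ℝ (f i₄).1 (f i₄).2) (hL₄ : p₄.1 = x₀)
    (h12 : p₂.2 < p₁.2) (h23 : p₃.2 < p₂.2) (h34 : p₄.2 < p₃.2) :
    ¬(G.Reachable i₁ i₃ ∧ G.Reachable i₂ i₄ ∧ ¬ G.Reachable i₁ i₂) := by
  rintro ⟨h13, h24, hn12⟩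
  classical
  obtain ⟨w13⟩ := h13
  obtain ⟨w24⟩ := h24
  obtain ⟨k, r, idx, hk, hr0, hrk, hprop⟩ := NI.anchors f G hadj w13 p₁ p₃ hp₁ hp₃
  obtain ⟨k', r', idx', hk', hr0', hrk', hprop'⟩ := NI.anchors f G hadj w24 p₂ p₄ hp₂ hp₄
  set SA : Set (ℝ × ℝ) := ⋃ i ∈ Finset.range k, segment ℝ (f (idx i)).1 (f (idx i)).2 with hSA
  set SB : Set (ℝ × ℝ) := ⋃ i ∈ Finset.range k', segment ℝ (f (idx' i)).1 (f (idx' i)).2 with hSB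
  have hSAc : IsCompact SA :=
    (Finset.range k).finite_toSet.isCompact_biUnion fun i _ => NI.isCompact_seg _ _
  have hSBc : IsCompact SB :=
    (Finset.range k').finite_toSet.isCompact_biUnion fun i _ => NI.isCompact_seg _ _
  have hp1A : p₁ ∈ SA :=
    Set.mem_biUnion (Finset.mem_range.mpr hk) (hr0 ▸ (hprop 0 hk).1)
  have hp2B : p₂ ∈ SB :=
    Set.mem_biUnion (Finset.mem_range.mpr hk') (hr0' ▸ (hprop' 0 hk').1)
  -- SA and SB are disjoint
  have hAB : SA ∩ SB = ∅ := by
    by_contra hcon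
    obtain ⟨z, hzA, hzB⟩ := Set.nonempty_iff_ne_empty.mpr hcon
    simp only [hSA, Set.mem_iUnion] at hzA
    simp only [hSB, Set.mem_iUnion] at hzB
    obtain ⟨i, hi, hzi⟩ := hzA
    obtain ⟨l, hl, hzl⟩ := hzB
    have hreach1 : G.Reachable i₁ (idx i) := (hprop i (Finset.mem_range.mp hi)).2.2
    have hreach2 : G.Reachable i₂ (idx' l) := (hprop' l (Finset.mem_range.mp hl)).2.2
    rcases eq_or_ne (idx i) (idx' l) with he | hne
    · exact hn12 (hreach1.trans (he ▸ hreach2.symm))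
    · have : G.Adj (idx i) (idx' l) := (hadj _ _).mpr ⟨hne, z, hzi, hzl⟩
      exact hn12 (hreach1.trans (this.reachable.trans hreach2.symm))
  obtain ⟨ε, hε, hsep⟩ := NI.exists_sep hSAc hSBc ⟨p₁, hp1A⟩ ⟨p₂, hp2B⟩ hAB
  set η : ℝ := min (min ((p₁.2 - p₂.2) / 2) ((p₂.2 - p₃.2) / 2))
      (min ((p₃.2 - p₄.2) / 2) (ε / 5)) with hηdef
  have hη : 0 < η :=
    lt_min (lt_min (by linarith) (by linarith)) (lt_min (by linarith) (by linarith))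
  have hη12 : p₂.2 + η < p₁.2 := by
    have : η ≤ (p₁.2 - p₂.2) / 2 := (min_le_left _ _).trans (min_le_left _ _)
    linarith
  have hη23 : p₃.2 + η < p₂.2 := by
    have : η ≤ (p₂.2 - p₃.2) / 2 := (min_le_left _ _).trans (min_le_right _ _)
    linarith
  have hη34 : p₄.2 + η < p₃.2 := by
    have : η ≤ (p₃.2 - p₄.2) / 2 := (min_le_right _ _).trans (min_le_left _ _)
    linarith
  have hηε : 4 * η < ε := by
    have : η ≤ ε / 5 := (min_le_right _ _).trans (min_le_right _ _)
    linarith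
  -- chains inside SA and SB
  have chA : NI.Chain SA η p₁ p₃ := by
    have claim : ∀ l, l ≤ k → NI.Chain SA η p₁ (r l) := by
      intro l
      induction l with
      | zero => exact fun _ => hr0 ▸ NI.chain_refl (hr0 ▸ hp1A)
      | succ l ih =>
        intro hl
        refine NI.chain_trans (ih (by omega)) (NI.chain_seg hη ?_)
        have hlk : l < k := by omega
        have hsub : segment ℝ (r l) (r (l + 1)) ⊆ segment ℝ (f (idx l)).1 (f (idx l)).2 :=
          (convex_segment _ _).segment_subset (hprop l hlk).1 (hprop l hlk).2.1
        exact hsub.trans fun z hz => Set.mem_biUnion (Finset.mem_range.mpr hlk) hz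
    exact hrk ▸ claim k le_rfl
  have chB : NI.Chain SB η p₂ p₄ := by
    have claim : ∀ l, l ≤ k' → NI.Chain SB η p₂ (r' l) := by
      intro l
      induction l with
      | zero => exact fun _ => hr0' ▸ NI.chain_refl (hr0' ▸ hp2B)
      | succ l ih =>
        intro hl
        refine NI.chain_trans (ih (by omega)) (NI.chain_seg hη ?_)
        have hlk : l < k' := by omega
        have hsub : segment ℝ (r' l) (r' (l + 1)) ⊆ segment ℝ (f (idx' l)).1 (f (idx' l)).2 :=
          (convex_segment _ _).segment_subset (hprop' l hlk).1 (hprop' l hlk).2.1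
        exact hsub.trans fun z hz => Set.mem_biUnion (Finset.mem_range.mpr hlk) hz
    exact hrk' ▸ claim k' le_rfl
  obtain ⟨nc, c, hc0, hcn, hcs, hcm⟩ := chA
  obtain ⟨mc, c', hc0', hcn', hcs', hcm'⟩ := chB
  -- halfplane bounds
  have hSAx : ∀ p ∈ SA, p.1 ≤ x₀ := by
    intro p hp
    simp only [hSA, Set.mem_iUnion] at hp
    obtain ⟨i, _, hpi⟩ := hp
    exact hleft (idx i) hpi
  have hSBx : ∀ p ∈ SB, p.1 ≤ x₀ := by
    intro p hp
    simp only [hSB, Set.mem_iUnion] at hp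
    obtain ⟨i, _, hpi⟩ := hp
    exact hleft (idx' i) hpi
  -- endpoints of the grid walks
  have hZ : ∀ p : ℝ × ℝ, p.1 = x₀ → NI.Zmap x₀ η p = ((0 : ℤ), ⌊p.2 / η⌋) := by
    intro p hp
    rw [NI.Zmap, hp, sub_self, zero_div, Int.ceil_zero]
  have hP0 : NI.zc x₀ η c 0 = ((0 : ℤ), ⌊p₁.2 / η⌋) := by
    rw [(by omega : (0 : ℕ) = 2 * 0), NI.zc_even, hc0, hZ p₁ hL₁]
  have hPn : NI.zc x₀ η c (2 * nc) = ((0 : ℤ), ⌊p₃.2 / η⌋) := by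
    rw [NI.zc_even, hcn, hZ p₃ hL₃]
  have hQ0 : NI.zc x₀ η c' 0 = ((0 : ℤ), ⌊p₂.2 / η⌋) := by
    rw [(by omega : (0 : ℕ) = 2 * 0), NI.zc_even, hc0', hZ p₂ hL₂]
  have hQm : NI.zc x₀ η c' (2 * mc) = ((0 : ℤ), ⌊p₄.2 / η⌋) := by
    rw [NI.zc_even, hcn', hZ p₄ hL₄]
  -- apply the discrete theorem
  refine NI.star (NI.zc x₀ η c) (NI.zc x₀ η c') (2 * nc) (2 * mc)
    ⌊p₁.2 / η⌋ ⌊p₂.2 / η⌋ ⌊p₃.2 / η⌋ ⌊p₄.2 / η⌋ hP0 hPn hQ0 hQm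
    (NI.floor_sep hη hη12) (NI.floor_sep hη hη23) (NI.floor_sep hη hη34)
    (NI.zc_step x₀ η hη c nc hcs) (NI.zc_step x₀ η hη c' mc hcs')
    (NI.zc_left x₀ η hη c nc fun i hi => hSAx _ (hcm i hi))
    (NI.zc_left x₀ η hη c' mc fun i hi => hSBx _ (hcm' i hi))
    ?_
  intro i hi j hj heq
  obtain ⟨ia, hia, ha⟩ := NI.zc_mem x₀ η hη c nc hcs i hi
  obtain ⟨ib, hib, hb⟩ := NI.zc_mem x₀ η hη c' mc hcs' j hj
  rw [heq] at ha
  have hd : dist (c ia) (c' ib) ≤ 4 * η := by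
    calc dist (c ia) (c' ib) ≤ dist (c ia) (NI.anchor x₀ η (NI.zc x₀ η c' j))
        + dist (NI.anchor x₀ η (NI.zc x₀ η c' j)) (c' ib) := dist_triangle _ _ _
    _ ≤ 2 * η + 2 * η := add_le_add (by rw [dist_comm]; exact ha) hb
    _ = 4 * η := by ring
  have := hsep (c ia) (hcm ia hia) (c' ib) (hcm' ib hib)
  linarith
end
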